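/- arXiv:2509.22749 — 3 statements merged into one kernel-verified Lean document; each statement's English description precedes it below -/
import Mathlib

section
/- Let σₙ = (1 2 ... n) be the standard n-cycle. Suppose π is an n-cycle in Sₙ with π(1) = 2 such that [σₙ, π] has cycle type (k₁, ..., kₘ). Then there exists an (n+1)-cycle π₊ in Sₙ₊₁ with π₊(1) = 2 such that [σₙ₊₁, π₊] has cycle type (k₁, ..., kₘ, 1). -/
open Equiv Equiv.Perm Fin

/-- Adding a fixed point: if `π` is an `n`-cycle with `π(1) = 2` (here `0 ↦ 1`
in 0-indexed notation) whose commutator with the shift `σₙ` has a given cycle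
type, then there is an `(n+1)`-cycle `π₊` with `π₊(1) = 2` whose commutator
with `σₙ₊₁` has the same cycle type together with an extra fixed point (note
that in Mathlib `Equiv.Perm.cycleType` records no cycles of length 1). -/
theorem commutator_add_fixed_point (n : ℕ) (hn : 2 ≤ n)
    (π : Equiv.Perm (Fin n)) (hπc : π.IsCycle) (hπn : π.support.card = n)
    (hπ1 : π ⟨0, by omega⟩ = ⟨1, by omega⟩) :
    ∃ πp : Equiv.Perm (Fin (n + 1)),
      πp.IsCycle ∧ πp.support.card = n + 1 ∧
      πp ⟨0, by omega⟩ = ⟨1, by omega⟩ ∧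
      ((finRotate (n + 1))⁻¹ * πp⁻¹ * finRotate (n + 1) * πp).cycleType
        = ((finRotate n)⁻¹ * π⁻¹ * finRotate n * π).cycleType := by
  obtain ⟨m, rfl⟩ : ∃ m, n = m + 2 := ⟨n - 2, by omega⟩
  have hπ0 : π 0 = 1 := by
    have : (⟨0, by omega⟩ : Fin (m+2)) = 0 := by ext; simp
    have h1 : (⟨1, by omega⟩ : Fin (m+2)) = 1 := by ext; simp [Nat.mod_eq_of_lt]
    rw [this, h1] at hπ1; exact hπ1
  have hπmove : ∀ x : Fin (m+2), π x ≠ x := by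
    intro x
    have hu : π.support = Finset.univ := Finset.eq_univ_of_card _ (by simpa using hπn)
    exact Equiv.Perm.mem_support.mp (hu ▸ Finset.mem_univ x)
  have hord : orderOf π = m + 2 := by rw [hπc.orderOf, hπn]
  have hπpow : π ^ (m+2) = 1 := by have := pow_orderOf_eq_one π; rwa [hord] at this
  have hpow0 : ∀ k, 0 < k → k < m + 2 → (π ^ k) 0 ≠ 0 := by
    intro k hk1 hk2 h
    have : π ^ k = 1 := hπc.pow_eq_one_iff.mpr ⟨0, by rw [hπ0]; exact one_ne_zero, h⟩
    have := orderOf_dvd_of_pow_eq_one this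
    rw [hord] at this
    exact absurd (Nat.le_of_dvd hk1 this) (by omega)
  -- the embedding equivalence
  set f : Fin (m+2) ≃ {x : Fin (m+3) // (x : ℕ) < m + 2} :=
    { toFun := fun x => ⟨x.castSucc, x.isLt⟩
      invFun := fun x => ⟨(x : Fin (m+3)).val, x.2⟩
      left_inv := fun x => by ext; rfl
      right_inv := fun x => by ext; rfl } with hf
  have hfval : ∀ x : Fin (m+2), ((f x : {x : Fin (m+3) // (x : ℕ) < m + 2}) : Fin (m+3)) = x.castSucc := fun x => rfl
  set E : Equiv.Perm (Fin (m+3)) := π.extendDomain f with hE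
  set πp : Equiv.Perm (Fin (m+3)) := Equiv.swap (Fin.last (m+2)) 0 * E with hπp
  have hE1 : ∀ x : Fin (m+2), E x.castSucc = (π x).castSucc := by
    intro x
    have := Equiv.Perm.extendDomain_apply_image π f x
    simpa [hfval] using this
  have hE2 : E (Fin.last (m+2)) = Fin.last (m+2) :=
    Equiv.Perm.extendDomain_apply_not_subtype π f (by simp)
  have hcsne : ∀ x : Fin (m+2), x.castSucc ≠ Fin.last (m+2) := by
    intro x h
    have := congrArg Fin.val h
    simp at this
    omega
  have hcs0 : ∀ x : Fin (m+2), x.castSucc = 0 ↔ x = 0 := by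
    intro x
    constructor
    · intro h; ext; simpa using congrArg Fin.val h
    · intro h; subst h; rfl
  have hP1 : ∀ x : Fin (m+2), πp x.castSucc =
      if π x = 0 then Fin.last (m+2) else (π x).castSucc := by
    intro x
    rw [hπp, Equiv.Perm.mul_apply, hE1]
    by_cases h : π x = 0
    · simp [h, Fin.castSucc_zero, Equiv.swap_apply_right]
    · rw [if_neg h, Equiv.swap_apply_of_ne_of_ne (hcsne _) (by rw [ne_eq, hcs0]; exact h)]
  have hP2 : πp (Fin.last (m+2)) = 0 := by
    rw [hπp, Equiv.Perm.mul_apply, hE2, Equiv.swap_apply_left]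
  -- πp moves everything
  have hPmove : ∀ x : Fin (m+3), πp x ≠ x := by
    intro x
    induction x using Fin.lastCases with
    | last =>
      rw [hP2]
      intro h
      have := congrArg Fin.val h
      simp at this
    | cast y =>
      rw [hP1]
      by_cases h : π y = 0
      · rw [if_pos h]; exact fun hc => hcsne y hc.symm
      · rw [if_neg h]
        intro hc
        exact hπmove y (Fin.castSucc_injective _ hc)
  have hPsupp : πp.support.card = m + 2 + 1 := by
    have hu : πp.support = Finset.univ := by
      ext x; simp [Equiv.Perm.mem_support, hPmove x]
    rw [hu]; simp
  have hP0 : πp 0 = 1 := by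
    have h0 : (0 : Fin (m+3)) = (0 : Fin (m+2)).castSucc := rfl
    rw [h0, hP1, hπ0, if_neg one_ne_zero]
    ext; simp [Nat.mod_eq_of_lt]
  -- iteration
  have hiter : ∀ j, j < m + 2 → (πp ^ j) 0 = ((π ^ j) 0).castSucc := by
    intro j hj
    induction j with
    | zero => rfl
    | succ k ih =>
      have hk : k < m + 2 := by omega
      rw [pow_succ', Equiv.Perm.mul_apply, ih hk, hP1]
      have hne : π ((π ^ k) 0) ≠ 0 := by
        intro h
        apply hpow0 (k+1) (by omega) hj
        rw [pow_succ', Equiv.Perm.mul_apply]; exact h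
      rw [if_neg hne, pow_succ', Equiv.Perm.mul_apply]
  have hiterN : (πp ^ (m+2)) 0 = Fin.last (m+2) := by
    have h1 : (π ^ (m+1)) 0 = π⁻¹ 0 := by
      apply π.injective
      rw [show ∀ x, π (π⁻¹ x) = x from π.apply_symm_apply, ← Equiv.Perm.mul_apply, ← pow_succ']
      rw [hπpow]; rfl
    rw [pow_succ', Equiv.Perm.mul_apply, hiter (m+1) (by omega), hP1, h1,
      if_pos (show π (π⁻¹ 0) = 0 from π.apply_symm_apply 0)]
  have hPcycle : πp.IsCycle := by
    refine ⟨0, by rw [hP0]; exact one_ne_zero, ?_⟩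
    intro y hy
    induction y using Fin.lastCases with
    | last => exact ⟨((m+2 : ℕ) : ℤ), by rw [zpow_natCast]; exact hiterN⟩
    | cast x =>
      have hsc : π.SameCycle 0 x := hπc.sameCycle (by rw [hπ0]; exact one_ne_zero) (hπmove x)
      obtain ⟨i, hi, hix⟩ := hsc.exists_pow_eq'
      rw [hord] at hi
      exact ⟨(i : ℤ), by rw [zpow_natCast, hiter i hi, hix]⟩
  -- the commutator
  set σ : Equiv.Perm (Fin (m+2)) := finRotate (m+2) with hσdef
  set σp : Equiv.Perm (Fin (m+3)) := finRotate (m+3) with hσpdef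
  set C : Equiv.Perm (Fin (m+2)) := σ⁻¹ * π⁻¹ * σ * π with hC
  have keyC : ∀ x : Fin (m+2), π (σ (C x)) = σ (π x) := by
    intro x
    simp [hC, Equiv.Perm.mul_apply]
  have hσ : ∀ z : Fin (m+2), σ z = z + 1 := fun z => finRotate_succ_apply z
  have hσp_cast : ∀ z : Fin (m+2), σp z.castSucc = z.succ := by
    intro z
    rw [hσpdef, finRotate_succ_apply, Fin.coeSucc_eq_succ]
  have hσp_last : σp (Fin.last (m+2)) = 0 := by
    rw [hσpdef, finRotate_succ_apply, Fin.last_add_one]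
  have hD1 : ∀ x : Fin (m+2), (C.extendDomain f) x.castSucc = (C x).castSucc := by
    intro x
    have := Equiv.Perm.extendDomain_apply_image C f x
    simpa [hfval] using this
  have hD2 : (C.extendDomain f) (Fin.last (m+2)) = Fin.last (m+2) :=
    Equiv.Perm.extendDomain_apply_not_subtype C f (by simp)
  have key : ∀ y : Fin (m+3), πp (σp ((C.extendDomain f) y)) = σp (πp y) := by
    intro y
    induction y using Fin.lastCases with
    | last =>
      rw [hD2, hσp_last, hP0, hP2]
      rw [hσpdef, finRotate_succ_apply, zero_add]
    | cast x =>
      rw [hD1, hσp_cast]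
      have hrel := keyC x
      by_cases hc : ((C x : Fin (m+2)) : ℕ) = m + 1
      · have hsl : (C x).succ = Fin.last (m+2) := by ext; simp [hc]
        have hc0 : σ (C x) = 0 := by
          rw [hσ]; ext; simp [Fin.val_add, hc]
        rw [hc0, hπ0] at hrel
        have hπx : π x = 0 := by
          have h2 : σ (π x) = 1 := hrel.symm
          rw [hσ] at h2
          have h3 : π x + 1 = 0 + 1 := by rw [zero_add, h2]
          exact add_right_cancel h3
        rw [hsl, hP2, hP1, if_pos hπx, hσp_last]
      · have hlt : ((C x : Fin (m+2)) : ℕ) + 1 < m + 2 := by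
          have := (C x).isLt; omega
        have hadd : (σ (C x) : ℕ) = ((C x : Fin (m+2)) : ℕ) + 1 := by
          rw [hσ]; simp [Fin.val_add]; omega
        have hsc2 : (C x).succ = (σ (C x)).castSucc := by
          ext; simp [hadd]
        rw [hsc2, hP1, hrel]
        have hπx0 : π x ≠ 0 := by
          intro h
          rw [h] at hrel
          have h1 : σ (C x) = 0 := by
            apply π.injective
            rw [hrel, hσ, zero_add, hπ0]
          have := congrArg Fin.val h1
          rw [hadd] at this
          simp at this
        rw [hP1, if_neg hπx0, hσp_cast]
        by_cases hpx : ((π x : Fin (m+2)) : ℕ) = m + 1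
        · have h0 : σ (π x) = 0 := by rw [hσ]; ext; simp [Fin.val_add, hpx]
          rw [h0, if_pos rfl]
          ext; simp [hpx]
        · have hvs : (σ (π x) : ℕ) = ((π x : Fin (m+2)) : ℕ) + 1 := by
            have := (π x).isLt
            rw [hσ]; simp [Fin.val_add]; omega
          have hne : σ (π x) ≠ 0 := by
            intro h; rw [h] at hvs; simp at hvs
          rw [if_neg hne]
          ext; simp [hvs]
  have hcomm : σp⁻¹ * πp⁻¹ * σp * πp = C.extendDomain f := by
    ext y
    have hk := key y
    simp only [Equiv.Perm.mul_apply]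
    rw [← hk, show ∀ (g : Equiv.Perm (Fin (m+3))) x, g⁻¹ (g x) = x from fun g => g.symm_apply_apply,
      show ∀ (g : Equiv.Perm (Fin (m+3))) x, g⁻¹ (g x) = x from fun g => g.symm_apply_apply]
  refine ⟨πp, hPcycle, hPsupp, ?_, ?_⟩
  · have h0 : (⟨0, by omega⟩ : Fin (m+2+1)) = 0 := rfl
    have h1 : (⟨1, by omega⟩ : Fin (m+2+1)) = 1 := by ext; simp [Nat.mod_eq_of_lt]
    rw [h0, h1]; exact hP0
  · show (σp⁻¹ * πp⁻¹ * σp * πp).cycleType = C.cycleType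
    rw [hcomm, Equiv.Perm.cycleType_extendDomain]
end

section
/- Let n₁, n₂ ≥ 2 and n = n₁ + n₂. Suppose π₁ is an n₁-cycle with π₁(1) = 2 and [σ_{n₁}, π₁] has cycle type (k₁,...,kₘ), and π₂ is an n₂-cycle with π₂(1) = 2 and [σ_{n₂}, π₂] has cycle type (l₁,...,lₛ). Then there exists an n-cycle π in Sₙ with π(1) = 2 such that [σₙ, π] has cycle type (k₁,...,kₘ, l₁,...,lₛ). -/
open Equiv Equiv.Perm

namespace CS

variable {n₁ n₂ : ℕ}

def eL (n₁ n₂ : ℕ) : Fin n₁ ≃ {x : Fin (n₁ + n₂) // (x : ℕ) < n₁} where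
  toFun a := ⟨⟨a.val, by omega⟩, a.isLt⟩
  invFun x := ⟨x.1.val, x.2⟩
  left_inv a := rfl
  right_inv x := rfl

def eR (n₁ n₂ : ℕ) : Fin n₂ ≃ {x : Fin (n₁ + n₂) // n₁ ≤ (x : ℕ)} where
  toFun b := ⟨⟨n₁ + b.val, by omega⟩, by simp⟩
  invFun x := ⟨x.1.val - n₁, by have := x.1.isLt; have := x.2; omega⟩
  left_inv b := by ext; simp
  right_inv x := by
    apply Subtype.ext; apply Fin.ext; have := x.2; simp; omega

def stitch (f₁ : Perm (Fin n₁)) (f₂ : Perm (Fin n₂)) : Perm (Fin (n₁ + n₂)) :=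
  f₁.extendDomain (eL n₁ n₂) * f₂.extendDomain (eR n₁ n₂)

lemma stitch_val_lt (f₁ : Perm (Fin n₁)) (f₂ : Perm (Fin n₂)) (x : Fin (n₁ + n₂))
    (hx : (x : ℕ) < n₁) : ((stitch f₁ f₂ x : Fin (n₁ + n₂)) : ℕ) = (f₁ ⟨x, hx⟩ : ℕ) := by
  unfold stitch
  rw [Perm.mul_apply, Perm.extendDomain_apply_not_subtype (b := x) _ _ (by omega),
    Perm.extendDomain_apply_subtype (b := x) _ _ hx]
  rfl

lemma stitch_val_ge (f₁ : Perm (Fin n₁)) (f₂ : Perm (Fin n₂)) (x : Fin (n₁ + n₂))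
    (hx : n₁ ≤ (x : ℕ)) :
    ((stitch f₁ f₂ x : Fin (n₁ + n₂)) : ℕ)
      = n₁ + (f₂ ⟨(x : ℕ) - n₁, by have := x.isLt; omega⟩ : ℕ) := by
  unfold stitch
  rw [Perm.mul_apply, Perm.extendDomain_apply_subtype (b := x) _ _ hx,
    Perm.extendDomain_apply_not_subtype
      (b := ((eR n₁ n₂) (f₂ ((eR n₁ n₂).symm ⟨x, hx⟩)) : Fin (n₁+n₂))) _ _ (by simp [eR])]
  rfl

lemma stitch_val_lt' (f₁ : Perm (Fin n₁)) (f₂ : Perm (Fin n₂)) (x : Fin (n₁ + n₂))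
    (a : Fin n₁) (hax : (a : ℕ) = (x : ℕ)) :
    ((stitch f₁ f₂ x : Fin (n₁ + n₂)) : ℕ) = (f₁ a : ℕ) := by
  have hx : (x : ℕ) < n₁ := hax ▸ a.isLt
  rw [stitch_val_lt f₁ f₂ x hx,
    show (⟨(x : ℕ), hx⟩ : Fin n₁) = a from Fin.ext hax.symm]

lemma stitch_val_ge' (f₁ : Perm (Fin n₁)) (f₂ : Perm (Fin n₂)) (x : Fin (n₁ + n₂))
    (b : Fin n₂) (hbx : n₁ + (b : ℕ) = (x : ℕ)) :
    ((stitch f₁ f₂ x : Fin (n₁ + n₂)) : ℕ) = n₁ + (f₂ b : ℕ) := by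
  have hx : n₁ ≤ (x : ℕ) := by omega
  have h := stitch_val_ge f₁ f₂ x hx
  rwa [show (⟨(x : ℕ) - n₁, by have := x.isLt; omega⟩ : Fin n₂) = b from
    Fin.ext (show (x : ℕ) - n₁ = (b : ℕ) from by have := b.isLt; omega)] at h

lemma disjoint_ext (f₁ : Perm (Fin n₁)) (f₂ : Perm (Fin n₂)) :
    Disjoint (f₁.extendDomain (eL n₁ n₂)) (f₂.extendDomain (eR n₁ n₂)) := by
  intro x
  by_cases hx : (x : ℕ) < n₁
  · right; exact Perm.extendDomain_apply_not_subtype _ _ (by omega)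
  · left; exact Perm.extendDomain_apply_not_subtype _ _ hx

lemma cycleType_stitch (f₁ : Perm (Fin n₁)) (f₂ : Perm (Fin n₂)) :
    (stitch f₁ f₂).cycleType = f₁.cycleType + f₂.cycleType := by
  rw [stitch, Perm.Disjoint.cycleType_mul (disjoint_ext f₁ f₂), cycleType_extendDomain, cycleType_extendDomain]

lemma rot_val {m : ℕ} (x : Fin m) :
    ((finRotate m x : Fin m) : ℕ) = if (x : ℕ) + 1 = m then 0 else (x : ℕ) + 1 := by
  rcases m with _ | m
  · exact x.elim0
  · rw [finRotate_succ_apply, Fin.val_add_one]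
    rcases eq_or_ne x (Fin.last m) with h | h
    · simp [h]
    · have : (x : ℕ) + 1 ≠ m + 1 := by
        intro hc; exact h (Fin.ext (by simpa [Fin.val_last] using Nat.succ_injective hc))
      simp [h, this]; omega

/-- the spliced `(n₁+n₂)`-cycle -/
def splice (f₁ : Perm (Fin n₁)) (f₂ : Perm (Fin n₂)) (hp₁ : 0 < n₁) (hp₂ : 0 < n₂) :
    Perm (Fin (n₁ + n₂)) :=
  Equiv.swap ⟨0, by omega⟩ ⟨n₁, by omega⟩ * stitch f₁ f₂

lemma splice_val_lt (f₁ : Perm (Fin n₁)) (f₂ : Perm (Fin n₂)) (hp₁ : 0 < n₁) (hp₂ : 0 < n₂)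
    (x : Fin (n₁ + n₂)) (hx : (x : ℕ) < n₁) :
    ((splice f₁ f₂ hp₁ hp₂ x : Fin (n₁ + n₂)) : ℕ)
      = if (f₁ ⟨x, hx⟩ : ℕ) = 0 then n₁ else (f₁ ⟨x, hx⟩ : ℕ) := by
  have hv := stitch_val_lt f₁ f₂ x hx
  have hlt : (f₁ ⟨x, hx⟩ : ℕ) < n₁ := (f₁ _).isLt
  rw [splice, Perm.mul_apply, Equiv.swap_apply_def]
  split_ifs with e0 e1 c c <;> simp_all [Fin.ext_iff]

lemma splice_val_ge (f₁ : Perm (Fin n₁)) (f₂ : Perm (Fin n₂)) (hp₁ : 0 < n₁) (hp₂ : 0 < n₂)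
    (x : Fin (n₁ + n₂)) (hx : n₁ ≤ (x : ℕ)) :
    ((splice f₁ f₂ hp₁ hp₂ x : Fin (n₁ + n₂)) : ℕ)
      = if (f₂ ⟨(x : ℕ) - n₁, by have := x.isLt; omega⟩ : ℕ) = 0 then 0
        else n₁ + (f₂ ⟨(x : ℕ) - n₁, by have := x.isLt; omega⟩ : ℕ) := by
  have hv := stitch_val_ge f₁ f₂ x hx
  have hlt : (f₂ ⟨(x : ℕ) - n₁, by have := x.isLt; omega⟩ : ℕ) < n₂ := (f₂ _).isLt
  rw [splice, Perm.mul_apply, Equiv.swap_apply_def]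
  split_ifs with e0 e1 c c <;> simp_all [Fin.ext_iff]

lemma splice_val_lt' (f₁ : Perm (Fin n₁)) (f₂ : Perm (Fin n₂)) (hp₁ : 0 < n₁) (hp₂ : 0 < n₂)
    (x : Fin (n₁ + n₂)) (a : Fin n₁) (hax : (a : ℕ) = (x : ℕ)) :
    ((splice f₁ f₂ hp₁ hp₂ x : Fin (n₁ + n₂)) : ℕ)
      = if (f₁ a : ℕ) = 0 then n₁ else (f₁ a : ℕ) := by
  have hx : (x : ℕ) < n₁ := hax ▸ a.isLt
  rw [splice_val_lt f₁ f₂ hp₁ hp₂ x hx,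
    show (⟨(x : ℕ), hx⟩ : Fin n₁) = a from Fin.ext hax.symm]

lemma splice_val_ge' (f₁ : Perm (Fin n₁)) (f₂ : Perm (Fin n₂)) (hp₁ : 0 < n₁) (hp₂ : 0 < n₂)
    (x : Fin (n₁ + n₂)) (b : Fin n₂) (hbx : n₁ + (b : ℕ) = (x : ℕ)) :
    ((splice f₁ f₂ hp₁ hp₂ x : Fin (n₁ + n₂)) : ℕ)
      = if (f₂ b : ℕ) = 0 then 0 else n₁ + (f₂ b : ℕ) := by
  have hx : n₁ ≤ (x : ℕ) := by omega
  have h := splice_val_ge f₁ f₂ hp₁ hp₂ x hx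
  rwa [show (⟨(x : ℕ) - n₁, by have := x.isLt; omega⟩ : Fin n₂) = b from
    Fin.ext (show (x : ℕ) - n₁ = (b : ℕ) from by have := b.isLt; omega)] at h

def comm' {m : ℕ} (f : Perm (Fin m)) : Perm (Fin m) :=
  f⁻¹ * (finRotate m)⁻¹ * f * finRotate m

lemma key {m : ℕ} (f : Perm (Fin m)) (a : Fin m) :
    finRotate m (f (comm' f a)) = f (finRotate m a) := by
  simp only [comm', Perm.mul_apply, Perm.inv_def, Equiv.apply_symm_apply]


lemma main_id (hp₁ : 0 < n₁) (hp₂ : 0 < n₂) (h₁ : 2 ≤ n₁) (h₂ : 2 ≤ n₂)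
    (π₁ : Perm (Fin n₁)) (π₂ : Perm (Fin n₂))
    (hm₁ : π₁ ⟨0, hp₁⟩ = ⟨1, h₁⟩) (hm₂ : π₂ ⟨0, hp₂⟩ = ⟨1, h₂⟩)
    (x : Fin (n₁ + n₂)) :
    finRotate (n₁ + n₂) (splice π₁ π₂ hp₁ hp₂ (stitch (comm' π₁) (comm' π₂) x))
      = splice π₁ π₂ hp₁ hp₂ (finRotate (n₁ + n₂) x) := by
  have hxv := x.isLt
  apply Fin.ext
  by_cases hx : (x : ℕ) < n₁
  · -- x in the first block
    have haval : ((⟨(x : ℕ), hx⟩ : Fin n₁) : ℕ) = (x : ℕ) := rfl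
    obtain ⟨uv, hult, huv⟩ :
        ∃ v, v < n₁ ∧ ((π₁ (comm' π₁ ⟨(x : ℕ), hx⟩) : Fin n₁) : ℕ) = v :=
      ⟨_, Fin.isLt _, rfl⟩
    obtain ⟨wv, hwlt, hwv⟩ :
        ∃ v, v < n₁ ∧ ((π₁ (finRotate n₁ ⟨(x : ℕ), hx⟩) : Fin n₁) : ℕ) = v :=
      ⟨_, Fin.isLt _, rfl⟩
    have hkeyv : wv = if uv + 1 = n₁ then 0 else uv + 1 := by
      have hk := congrArg Fin.val (key π₁ ⟨(x : ℕ), hx⟩)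
      rw [rot_val, huv, hwv] at hk
      exact hk.symm
    have hH : ((stitch (comm' π₁) (comm' π₂) x : Fin (n₁+n₂)) : ℕ)
        = ((comm' π₁ ⟨(x : ℕ), hx⟩ : Fin n₁) : ℕ) :=
      stitch_val_lt' _ _ x ⟨(x : ℕ), hx⟩ rfl
    have hL1 : ((splice π₁ π₂ hp₁ hp₂ (stitch (comm' π₁) (comm' π₂) x) : Fin (n₁+n₂)) : ℕ)
        = if uv = 0 then n₁ else uv := by
      rw [splice_val_lt' π₁ π₂ hp₁ hp₂ _ _ hH.symm, huv]
    by_cases hx1 : (x : ℕ) + 1 < n₁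
    · -- staying in the first block
      have hr : ((finRotate (n₁+n₂) x : Fin (n₁+n₂)) : ℕ) = (x : ℕ) + 1 := by
        rw [rot_val]; split_ifs <;> first | contradiction | omega
      have hrot1 : ((finRotate n₁ ⟨(x : ℕ), hx⟩ : Fin n₁) : ℕ) = (x : ℕ) + 1 := by
        rw [rot_val]; rw [haval]; split_ifs <;> first | contradiction | omega
      have hR : ((splice π₁ π₂ hp₁ hp₂ (finRotate (n₁+n₂) x) : Fin (n₁+n₂)) : ℕ)
          = if wv = 0 then n₁ else wv := by
        rw [splice_val_lt' π₁ π₂ hp₁ hp₂ _ (finRotate n₁ ⟨(x : ℕ), hx⟩) (by omega), hwv]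
      by_cases h0 : uv = 0
      · exfalso
        rw [h0] at hkeyv
        have hw1 : wv = 1 := by split_ifs at hkeyv <;> omega
        have he : π₁ (finRotate n₁ ⟨(x : ℕ), hx⟩) = π₁ ⟨0, hp₁⟩ := by
          apply Fin.ext
          rw [hwv, hm₁]
          exact hw1
        have h3 := π₁.injective he
        have h4 : ((finRotate n₁ ⟨(x : ℕ), hx⟩ : Fin n₁) : ℕ) = 0 := by rw [h3]
        omega
      · rw [rot_val, hL1, hR, hkeyv]
        split_ifs <;> first | contradiction | omega
    · -- leaving the first block
      have hx2 : (x : ℕ) + 1 = n₁ := by omega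
      have hr : ((finRotate (n₁+n₂) x : Fin (n₁+n₂)) : ℕ) = n₁ := by
        rw [rot_val]; split_ifs <;> first | contradiction | omega
      have hrot1 : ((finRotate n₁ ⟨(x : ℕ), hx⟩ : Fin n₁) : ℕ) = 0 := by
        rw [rot_val]; rw [haval]; split_ifs <;> first | contradiction | omega
      have h3 : finRotate n₁ ⟨(x : ℕ), hx⟩ = ⟨0, hp₁⟩ := Fin.ext hrot1
      have hw1 : wv = 1 := by rw [← hwv, h3, hm₁]
      have h0 : uv = 0 := by
        rw [hw1] at hkeyv; split_ifs at hkeyv <;> omega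
      have hR : ((splice π₁ π₂ hp₁ hp₂ (finRotate (n₁+n₂) x) : Fin (n₁+n₂)) : ℕ)
          = n₁ + 1 := by
        rw [splice_val_ge' π₁ π₂ hp₁ hp₂ _ ⟨0, hp₂⟩
          (show n₁ + (0 : ℕ) = _ from by rw [hr]; omega), hm₂]
        simp
      rw [rot_val, hL1, hR, h0]
      split_ifs <;> first | contradiction | omega
  · -- x in the second block
    have hx' : n₁ ≤ (x : ℕ) := by omega
    have hb : (x : ℕ) - n₁ < n₂ := by omega
    have hbval : ((⟨(x : ℕ) - n₁, hb⟩ : Fin n₂) : ℕ) = (x : ℕ) - n₁ := rfl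
    obtain ⟨uv, hult, huv⟩ :
        ∃ v, v < n₂ ∧ ((π₂ (comm' π₂ ⟨(x : ℕ) - n₁, hb⟩) : Fin n₂) : ℕ) = v :=
      ⟨_, Fin.isLt _, rfl⟩
    obtain ⟨wv, hwlt, hwv⟩ :
        ∃ v, v < n₂ ∧ ((π₂ (finRotate n₂ ⟨(x : ℕ) - n₁, hb⟩) : Fin n₂) : ℕ) = v :=
      ⟨_, Fin.isLt _, rfl⟩
    have hkeyv : wv = if uv + 1 = n₂ then 0 else uv + 1 := by
      have hk := congrArg Fin.val (key π₂ ⟨(x : ℕ) - n₁, hb⟩)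
      rw [rot_val, huv, hwv] at hk
      exact hk.symm
    have hH : ((stitch (comm' π₁) (comm' π₂) x : Fin (n₁+n₂)) : ℕ)
        = n₁ + ((comm' π₂ ⟨(x : ℕ) - n₁, hb⟩ : Fin n₂) : ℕ) :=
      stitch_val_ge' _ _ x ⟨(x : ℕ) - n₁, hb⟩ (show n₁ + ((x : ℕ) - n₁) = (x : ℕ) by omega)
    have hL1 : ((splice π₁ π₂ hp₁ hp₂ (stitch (comm' π₁) (comm' π₂) x) : Fin (n₁+n₂)) : ℕ)
        = if uv = 0 then 0 else n₁ + uv := by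
      rw [splice_val_ge' π₁ π₂ hp₁ hp₂ _ _ hH.symm, huv]
    by_cases hx1 : (x : ℕ) + 1 < n₁ + n₂
    · -- staying in the second block
      have hr : ((finRotate (n₁+n₂) x : Fin (n₁+n₂)) : ℕ) = (x : ℕ) + 1 := by
        rw [rot_val]; split_ifs <;> first | contradiction | omega
      have hrot2 : ((finRotate n₂ ⟨(x : ℕ) - n₁, hb⟩ : Fin n₂) : ℕ) = (x : ℕ) + 1 - n₁ := by
        rw [rot_val]; rw [hbval]; split_ifs <;> first | contradiction | omega
      have hR : ((splice π₁ π₂ hp₁ hp₂ (finRotate (n₁+n₂) x) : Fin (n₁+n₂)) : ℕ)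
          = if wv = 0 then 0 else n₁ + wv := by
        rw [splice_val_ge' π₁ π₂ hp₁ hp₂ _ (finRotate n₂ ⟨(x : ℕ) - n₁, hb⟩) (by omega), hwv]
      by_cases h0 : uv = 0
      · exfalso
        rw [h0] at hkeyv
        have hw1 : wv = 1 := by split_ifs at hkeyv <;> omega
        have he : π₂ (finRotate n₂ ⟨(x : ℕ) - n₁, hb⟩) = π₂ ⟨0, hp₂⟩ := by
          apply Fin.ext
          rw [hwv, hm₂]
          exact hw1
        have h3 := π₂.injective he
        have h4 : ((finRotate n₂ ⟨(x : ℕ) - n₁, hb⟩ : Fin n₂) : ℕ) = 0 := by rw [h3]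
        omega
      · rw [rot_val, hL1, hR, hkeyv]
        split_ifs <;> first | contradiction | omega
    · -- wrapping around to the first block
      have hx2 : (x : ℕ) + 1 = n₁ + n₂ := by omega
      have hr : ((finRotate (n₁+n₂) x : Fin (n₁+n₂)) : ℕ) = 0 := by
        rw [rot_val]; split_ifs <;> first | contradiction | omega
      have hrot2 : ((finRotate n₂ ⟨(x : ℕ) - n₁, hb⟩ : Fin n₂) : ℕ) = 0 := by
        rw [rot_val]; rw [hbval]; split_ifs <;> first | contradiction | omega
      have h3 : finRotate n₂ ⟨(x : ℕ) - n₁, hb⟩ = ⟨0, hp₂⟩ := Fin.ext hrot2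
      have hw1 : wv = 1 := by rw [← hwv, h3, hm₂]
      have h0 : uv = 0 := by
        rw [hw1] at hkeyv; split_ifs at hkeyv <;> omega
      have hR : ((splice π₁ π₂ hp₁ hp₂ (finRotate (n₁+n₂) x) : Fin (n₁+n₂)) : ℕ) = 1 := by
        rw [splice_val_lt' π₁ π₂ hp₁ hp₂ _ ⟨0, hp₁⟩ (show (0 : ℕ) = _ from by rw [hr]), hm₁]
        simp
      rw [rot_val, hL1, hR, h0]
      split_ifs <;> first | contradiction | omega


lemma support_full {m : ℕ} (f : Perm (Fin m)) (hs : f.support.card = m) (y : Fin m) :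
    f y ≠ y := by
  have h : f.support = Finset.univ := Finset.eq_univ_of_card _ (by simpa using hs)
  exact mem_support.mp (h ▸ Finset.mem_univ y)

variable (π₁ : Perm (Fin n₁)) (π₂ : Perm (Fin n₂))

lemma splice_ne (hp₁ : 0 < n₁) (hp₂ : 0 < n₂)
    (hf₁ : ∀ y, π₁ y ≠ y) (hf₂ : ∀ y, π₂ y ≠ y) (x : Fin (n₁ + n₂)) :
    splice π₁ π₂ hp₁ hp₂ x ≠ x := by
  intro hEq
  have hv : ((splice π₁ π₂ hp₁ hp₂ x : Fin (n₁+n₂)) : ℕ) = (x : ℕ) := by rw [hEq]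
  by_cases hx : (x : ℕ) < n₁
  · rw [splice_val_lt' π₁ π₂ hp₁ hp₂ x ⟨x, hx⟩ rfl] at hv
    have hne : (π₁ ⟨x, hx⟩ : ℕ) ≠ (x : ℕ) := fun hc => hf₁ ⟨x, hx⟩ (Fin.ext hc)
    split_ifs at hv <;> omega
  · have hx' : n₁ ≤ (x : ℕ) := by omega
    have hb : (x : ℕ) - n₁ < n₂ := by have := x.isLt; omega
    rw [splice_val_ge' π₁ π₂ hp₁ hp₂ x ⟨(x : ℕ) - n₁, hb⟩
      (show n₁ + ((x : ℕ) - n₁) = (x : ℕ) by omega)] at hv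
    have hne : (π₂ ⟨(x : ℕ) - n₁, hb⟩ : ℕ) ≠ (x : ℕ) - n₁ :=
      fun hc => hf₂ ⟨(x : ℕ) - n₁, hb⟩ (Fin.ext hc)
    split_ifs at hv <;> omega

lemma splice_support (hp₁ : 0 < n₁) (hp₂ : 0 < n₂)
    (hf₁ : ∀ y, π₁ y ≠ y) (hf₂ : ∀ y, π₂ y ≠ y) :
    (splice π₁ π₂ hp₁ hp₂).support.card = n₁ + n₂ := by
  have h : (splice π₁ π₂ hp₁ hp₂).support = Finset.univ :=
    Finset.eq_univ_iff_forall.mpr fun x => mem_support.mpr (splice_ne π₁ π₂ hp₁ hp₂ hf₁ hf₂ x)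
  rw [h]; simp

lemma pow_ne {m : ℕ} (f : Perm (Fin m)) (hc : f.IsCycle) (hs : f.support.card = m)
    (hp : 0 < m) (j : ℕ) (h0 : 0 < j) (hj : j < m) : (f ^ j) ⟨0, hp⟩ ≠ ⟨0, hp⟩ := by
  intro hEq
  have hord : orderOf f = m := by rw [hc.orderOf, hs]
  have h1 : f ^ j = 1 := hc.pow_eq_one_iff.mpr ⟨⟨0, hp⟩, support_full f hs _, hEq⟩
  have h2 := orderOf_dvd_of_pow_eq_one h1
  rw [hord] at h2
  exact absurd (Nat.le_of_dvd h0 h2) (by omega)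

lemma claimA (hp₁ : 0 < n₁) (hp₂ : 0 < n₂) (hc₁ : π₁.IsCycle) (hs₁ : π₁.support.card = n₁)
    (k : ℕ) : k < n₁ →
    ((splice π₁ π₂ hp₁ hp₂) ^ k) ⟨0, by omega⟩ = Fin.castAdd n₂ ((π₁ ^ k) ⟨0, hp₁⟩) := by
  induction k with
  | zero => intro _; apply Fin.ext; simp
  | succ k ih =>
    intro hk
    rw [pow_succ', Perm.mul_apply, ih (by omega)]
    apply Fin.ext
    rw [splice_val_lt' π₁ π₂ hp₁ hp₂ _ ((π₁ ^ k) ⟨0, hp₁⟩) (by simp)]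
    rw [show π₁ ((π₁ ^ k) ⟨0, hp₁⟩) = (π₁ ^ (k+1)) ⟨0, hp₁⟩ from by
      rw [pow_succ', Perm.mul_apply]]
    have hne : (((π₁ ^ (k+1)) ⟨0, hp₁⟩ : Fin n₁) : ℕ) ≠ 0 :=
      fun hc => pow_ne π₁ hc₁ hs₁ hp₁ (k+1) (by omega) hk (Fin.ext hc)
    rw [if_neg hne]
    simp

lemma claimMid (hp₁ : 0 < n₁) (hp₂ : 0 < n₂) (hc₁ : π₁.IsCycle) (hs₁ : π₁.support.card = n₁) :
    ((splice π₁ π₂ hp₁ hp₂) ^ n₁) ⟨0, by omega⟩ = Fin.natAdd n₁ ⟨0, hp₂⟩ := by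
  have hsplit : (splice π₁ π₂ hp₁ hp₂) ^ n₁
      = (splice π₁ π₂ hp₁ hp₂) * (splice π₁ π₂ hp₁ hp₂) ^ (n₁ - 1) := by
    rw [show (splice π₁ π₂ hp₁ hp₂) ^ n₁ = (splice π₁ π₂ hp₁ hp₂) ^ (n₁ - 1 + 1) from by
      rw [Nat.sub_add_cancel hp₁], pow_succ']
  rw [hsplit, Perm.mul_apply, claimA π₁ π₂ hp₁ hp₂ hc₁ hs₁ (n₁ - 1) (by omega)]
  apply Fin.ext
  rw [splice_val_lt' π₁ π₂ hp₁ hp₂ _ ((π₁ ^ (n₁ - 1)) ⟨0, hp₁⟩) (by simp)]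
  rw [show π₁ ((π₁ ^ (n₁ - 1)) ⟨0, hp₁⟩) = (π₁ ^ n₁) ⟨0, hp₁⟩ from by
    rw [show π₁ ^ n₁ = π₁ ^ (n₁ - 1 + 1) from by rw [Nat.sub_add_cancel hp₁], pow_succ',
      Perm.mul_apply]]
  have hord : orderOf π₁ = n₁ := by rw [hc₁.orderOf, hs₁]
  have hone := pow_orderOf_eq_one π₁
  rw [hord] at hone
  rw [hone]
  simp

lemma claimB (hp₁ : 0 < n₁) (hp₂ : 0 < n₂) (hc₁ : π₁.IsCycle) (hs₁ : π₁.support.card = n₁)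
    (hc₂ : π₂.IsCycle) (hs₂ : π₂.support.card = n₂)
    (k : ℕ) : k < n₂ →
    ((splice π₁ π₂ hp₁ hp₂) ^ (n₁ + k)) ⟨0, by omega⟩
      = Fin.natAdd n₁ ((π₂ ^ k) ⟨0, hp₂⟩) := by
  induction k with
  | zero =>
    intro _
    rw [Nat.add_zero, claimMid π₁ π₂ hp₁ hp₂ hc₁ hs₁]
    apply Fin.ext; simp
  | succ k ih =>
    intro hk
    rw [show n₁ + (k+1) = (n₁ + k) + 1 from rfl, pow_succ', Perm.mul_apply, ih (by omega)]
    apply Fin.ext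
    rw [splice_val_ge' π₁ π₂ hp₁ hp₂ _ ((π₂ ^ k) ⟨0, hp₂⟩) (by simp)]
    rw [show π₂ ((π₂ ^ k) ⟨0, hp₂⟩) = (π₂ ^ (k+1)) ⟨0, hp₂⟩ from by
      rw [pow_succ', Perm.mul_apply]]
    have hne : (((π₂ ^ (k+1)) ⟨0, hp₂⟩ : Fin n₂) : ℕ) ≠ 0 :=
      fun hc => pow_ne π₂ hc₂ hs₂ hp₂ (k+1) (by omega) hk (Fin.ext hc)
    rw [if_neg hne]
    simp

lemma cover (hp₁ : 0 < n₁) (hp₂ : 0 < n₂) (hc₁ : π₁.IsCycle) (hs₁ : π₁.support.card = n₁)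
    (hc₂ : π₂.IsCycle) (hs₂ : π₂.support.card = n₂) (y : Fin (n₁ + n₂)) :
    ∃ k : ℕ, ((splice π₁ π₂ hp₁ hp₂) ^ k) ⟨0, by omega⟩ = y := by
  by_cases hy : (y : ℕ) < n₁
  · have hsc : π₁.SameCycle ⟨0, hp₁⟩ ⟨y, hy⟩ :=
      hc₁.sameCycle (support_full π₁ hs₁ _) (support_full π₁ hs₁ _)
    obtain ⟨i, hi, hpow⟩ := hsc.exists_pow_eq'
    rw [hc₁.orderOf, hs₁] at hi
    refine ⟨i, ?_⟩
    rw [claimA π₁ π₂ hp₁ hp₂ hc₁ hs₁ i hi, hpow]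
    apply Fin.ext; simp
  · have hy' : n₁ ≤ (y : ℕ) := by omega
    have hsc : π₂.SameCycle ⟨0, hp₂⟩ ⟨(y : ℕ) - n₁, by have := y.isLt; omega⟩ :=
      hc₂.sameCycle (support_full π₂ hs₂ _) (support_full π₂ hs₂ _)
    obtain ⟨i, hi, hpow⟩ := hsc.exists_pow_eq'
    rw [hc₂.orderOf, hs₂] at hi
    refine ⟨n₁ + i, ?_⟩
    rw [claimB π₁ π₂ hp₁ hp₂ hc₁ hs₁ hc₂ hs₂ i hi, hpow]
    apply Fin.ext; simp; omega

lemma splice_isCycle (hp₁ : 0 < n₁) (hp₂ : 0 < n₂) (hc₁ : π₁.IsCycle)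
    (hs₁ : π₁.support.card = n₁) (hc₂ : π₂.IsCycle) (hs₂ : π₂.support.card = n₂) :
    (splice π₁ π₂ hp₁ hp₂).IsCycle := by
  refine ⟨⟨0, by omega⟩, ?_, fun w hw => ?_⟩
  · exact splice_ne π₁ π₂ hp₁ hp₂ (support_full π₁ hs₁) (support_full π₂ hs₂) _
  · obtain ⟨k, hk⟩ := cover π₁ π₂ hp₁ hp₂ hc₁ hs₁ hc₂ hs₂ w
    exact ⟨(k : ℤ), by rw [zpow_natCast]; exact hk⟩

end CS

set_option maxHeartbeats 1600000 in
/-- Stitching together: given an `n₁`-cycle and an `n₂`-cycle, each sending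
`1 ↦ 2` (0-indexed: `0 ↦ 1`), whose commutators with the respective shifts
have cycle types `(k₁,…,kₘ)` and `(l₁,…,lₛ)`, there exists an `(n₁+n₂)`-cycle
`π` with `π(1) = 2` whose commutator with the shift has cycle type
`(k₁,…,kₘ,l₁,…,lₛ)` (the sum of the two cycle-type multisets). -/
theorem commutator_stitching (n₁ n₂ : ℕ) (h₁ : 2 ≤ n₁) (h₂ : 2 ≤ n₂)
    (π₁ : Equiv.Perm (Fin n₁)) (hc₁ : π₁.IsCycle) (hs₁ : π₁.support.card = n₁)
    (hm₁ : π₁ ⟨0, by omega⟩ = ⟨1, by omega⟩)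
    (π₂ : Equiv.Perm (Fin n₂)) (hc₂ : π₂.IsCycle) (hs₂ : π₂.support.card = n₂)
    (hm₂ : π₂ ⟨0, by omega⟩ = ⟨1, by omega⟩) :
    ∃ π : Equiv.Perm (Fin (n₁ + n₂)),
      π.IsCycle ∧ π.support.card = n₁ + n₂ ∧
      π ⟨0, by omega⟩ = ⟨1, by omega⟩ ∧
      ((finRotate (n₁ + n₂))⁻¹ * π⁻¹ * finRotate (n₁ + n₂) * π).cycleType
        = ((finRotate n₁)⁻¹ * π₁⁻¹ * finRotate n₁ * π₁).cycleType
          + ((finRotate n₂)⁻¹ * π₂⁻¹ * finRotate n₂ * π₂).cycleType := by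
  have hp₁ : 0 < n₁ := by omega
  have hp₂ : 0 < n₂ := by omega
  refine ⟨CS.splice π₁ π₂ hp₁ hp₂,
    CS.splice_isCycle π₁ π₂ hp₁ hp₂ hc₁ hs₁ hc₂ hs₂,
    CS.splice_support π₁ π₂ hp₁ hp₂ (CS.support_full π₁ hs₁) (CS.support_full π₂ hs₂),
    ?_, ?_⟩
  · apply Fin.ext
    rw [CS.splice_val_lt' π₁ π₂ hp₁ hp₂ ⟨0, by omega⟩ ⟨0, hp₁⟩ rfl, hm₁]
    simp
  · have hcomm : CS.stitch (CS.comm' π₁) (CS.comm' π₂)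
        = (CS.splice π₁ π₂ hp₁ hp₂)⁻¹ * (finRotate (n₁+n₂))⁻¹
            * (CS.splice π₁ π₂ hp₁ hp₂) * finRotate (n₁+n₂) := by
      apply Equiv.ext
      intro x
      have hid := CS.main_id hp₁ hp₂ h₁ h₂ π₁ π₂ hm₁ hm₂ x
      simp only [Equiv.Perm.mul_apply]
      rw [← hid]; simp only [Equiv.Perm.inv_def, Equiv.symm_apply_apply]
    have hCinv : (finRotate (n₁ + n₂))⁻¹ * (CS.splice π₁ π₂ hp₁ hp₂)⁻¹ * finRotate (n₁ + n₂)
        * (CS.splice π₁ π₂ hp₁ hp₂)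
        = (CS.stitch (CS.comm' π₁) (CS.comm' π₂))⁻¹ := by
      rw [hcomm]; group
    rw [hCinv, Equiv.Perm.cycleType_inv, CS.cycleType_stitch]
    have e₁ : CS.comm' π₁ = ((finRotate n₁)⁻¹ * π₁⁻¹ * finRotate n₁ * π₁)⁻¹ := by
      unfold CS.comm'; group
    have e₂ : CS.comm' π₂ = ((finRotate n₂)⁻¹ * π₂⁻¹ * finRotate n₂ * π₂)⁻¹ := by
      unfold CS.comm'; group
    rw [e₁, e₂, Equiv.Perm.cycleType_inv, Equiv.Perm.cycleType_inv]
end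

section
/- For every odd n ≥ 5, there exists an n+3-cycle π in Sₙ₊₃ with π(1) = 2 such that [σₙ₊₃, π] has cycle type (n, 3). Explicitly, π = (1 2 4 5 7 8 10 ... n+3 n+2 n ... 9 6 3) works, and the resulting commutator contains the 3-cycle (1 5 6). -/
set_option linter.unusedVariables false
namespace CommAux
def ff (M x : ℕ) : ℕ :=
  if x = 0 then 1 else if x = 1 then 3 else if x = 2 then 0 else if x = 3 then 4
  else if x = 4 then 6 else if x = 5 then 2 else if x = 6 then 7
  else if x = M - 2 then 5
  else if M = 8 then 5
  else if x = 7 then 9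
  else if x % 2 = 1 then x - 1
  else x + 3

def gg (M y : ℕ) : ℕ :=
  if y = 0 then 2 else if y = 1 then 0 else if y = 2 then 5 else if y = 3 then 1
  else if y = 4 then 3 else if y = 5 then (if M = 8 then 7 else M - 2)
  else if y = 6 then 4 else if y = 7 then 6
  else if y = 9 then 7
  else if y % 2 = 1 then y - 3
  else y + 1

def CC (M x : ℕ) : ℕ :=
  if x = 0 then 4 else if x = 1 then 2 else if x = 2 then M - 1
  else if x = 3 then (if M = 8 then 6 else M - 3)
  else if x = 4 then 5 else if x = 5 then 0
  else if x = 6 then (if M = 8 then 1 else 8)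
  else if x = 7 then (if M = 8 then 3 else if M = 10 then 1 else 10)
  else if x = 9 then 6
  else if x = M - 4 then 1
  else if x = M - 2 then 3
  else if x % 2 = 0 then x + 4
  else x - 4

def pI (M x : ℕ) : ℕ :=
  if x = 0 then 0 else if x = 1 then 1 else if x = 2 then M - 1 else if x = 3 then 2
  else if x = 4 then 3 else if x = 5 then M - 2 else if x = 6 then 4 else if x = 7 then 5
  else if x % 2 = 0 then x - 1
  else x - 3

def GG (M k : ℕ) : ℕ :=
  if k = 0 then 0 else if k = 1 then 1 else if k = 2 then 3 else if k = 3 then 4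
  else if k = 4 then 6 else if k = 5 then 7
  else if k = M - 2 then 5 else if k = M - 1 then 2
  else if k % 2 = 0 then k + 3
  else k + 1

def dI (M x : ℕ) : ℕ :=
  if x = 1 then 0 else if x = 2 then 1
  else if x = 3 then (if M % 4 = 0 then 3 + (M - 8) / 2 else 5 + (M - 10) / 2)
  else if x = 6 then (if M % 4 = 0 then 4 + 3 * ((M - 8) / 4) else 3 + (M - 10) / 4)
  else if M % 4 = 0 then
    (if x % 4 = 3 then 2 + (M - 1 - x) / 4
     else if x % 4 = 2 then 3 + (M - 8) / 4 + (x - 10) / 4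
     else if x % 4 = 1 then 4 + (M - 8) / 2 + (M - 3 - x) / 4
     else 5 + 3 * ((M - 8) / 4) + (x - 8) / 4)
  else
    (if x % 4 = 1 then 2 + (M - 1 - x) / 4
     else if x % 4 = 0 then 4 + (M - 10) / 4 + (x - 8) / 4
     else if x % 4 = 3 then 6 + (M - 10) / 2 + (M - 3 - x) / 4
     else 7 + 3 * ((M - 10) / 4) + (x - 10) / 4)

def HH (M k : ℕ) : ℕ :=
  if k = 0 then 1 else if k = 1 then 2
  else if M % 4 = 0 then
    (if k ≤ 2 + (M - 8) / 4 then M - 1 - 4 * (k - 2)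
     else if k ≤ 2 + (M - 8) / 2 then 10 + 4 * (k - 3 - (M - 8) / 4)
     else if k = 3 + (M - 8) / 2 then 3
     else if k ≤ 3 + 3 * ((M - 8) / 4) then M - 3 - 4 * (k - 4 - (M - 8) / 2)
     else if k = 4 + 3 * ((M - 8) / 4) then 6
     else 8 + 4 * (k - 5 - 3 * ((M - 8) / 4)))
  else
    (if k ≤ 2 + (M - 10) / 4 then M - 1 - 4 * (k - 2)
     else if k = 3 + (M - 10) / 4 then 6
     else if k ≤ 4 + (M - 10) / 2 then 8 + 4 * (k - 4 - (M - 10) / 4)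
     else if k = 5 + (M - 10) / 2 then 3
     else if k ≤ 6 + 3 * ((M - 10) / 4) then M - 3 - 4 * (k - 6 - (M - 10) / 2)
     else 10 + 4 * (k - 7 - 3 * ((M - 10) / 4)))

/-! ### eval lemmas for ff -/

lemma ff0 {M} : ff M 0 = 1 := rfl
lemma ff1 {M} : ff M 1 = 3 := rfl
lemma ff2 {M} : ff M 2 = 0 := rfl
lemma ff3 {M} : ff M 3 = 4 := rfl
lemma ff4 {M} : ff M 4 = 6 := rfl
lemma ff5 {M} : ff M 5 = 2 := rfl
lemma ff6 {M} : ff M 6 = 7 := rfl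
lemma ffM2 {M} (h10 : 10 ≤ M) : ff M (M - 2) = 5 := by
  unfold ff
  rw [if_neg (by omega), if_neg (by omega), if_neg (by omega), if_neg (by omega),
    if_neg (by omega), if_neg (by omega), if_neg (by omega), if_pos rfl]
lemma ff7 {M} (h10 : 10 ≤ M) : ff M 7 = 9 := by
  unfold ff
  rw [if_neg (by omega), if_neg (by omega), if_neg (by omega), if_neg (by omega),
    if_neg (by omega), if_neg (by omega), if_neg (by omega), if_neg (by omega),
    if_neg (by omega), if_pos rfl]
lemma ff_odd {M x} (h9 : 9 ≤ x) (hx : x < M) (h2 : x % 2 = 1) (hE : M % 2 = 0) :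
    ff M x = x - 1 := by
  unfold ff
  rw [if_neg (by omega), if_neg (by omega), if_neg (by omega), if_neg (by omega),
    if_neg (by omega), if_neg (by omega), if_neg (by omega), if_neg (by omega),
    if_neg (by omega), if_neg (by omega), if_pos h2]
lemma ff_even {M x} (h8 : 8 ≤ x) (hx : x < M) (h2 : x % 2 = 0) (hne : x ≠ M - 2) :
    ff M x = x + 3 := by
  unfold ff
  rw [if_neg (by omega), if_neg (by omega), if_neg (by omega), if_neg (by omega),
    if_neg (by omega), if_neg (by omega), if_neg (by omega), if_neg hne,
    if_neg (by omega), if_neg (by omega), if_neg (by omega)]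

/-! ### eval lemmas for gg -/

lemma gg0 {M} : gg M 0 = 2 := rfl
lemma gg1 {M} : gg M 1 = 0 := rfl
lemma gg2 {M} : gg M 2 = 5 := rfl
lemma gg3 {M} : gg M 3 = 1 := rfl
lemma gg4 {M} : gg M 4 = 3 := rfl
lemma gg6 {M} : gg M 6 = 4 := rfl
lemma gg7 {M} : gg M 7 = 6 := rfl
lemma gg9 {M} : gg M 9 = 7 := rfl
lemma gg5 {M} (h : M ≠ 8) : gg M 5 = M - 2 := by
  unfold gg
  rw [if_neg (by omega), if_neg (by omega), if_neg (by omega), if_neg (by omega),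
    if_neg (by omega), if_pos rfl, if_neg h]
lemma gg_odd {M y} (h11 : 11 ≤ y) (h2 : y % 2 = 1) : gg M y = y - 3 := by
  unfold gg
  rw [if_neg (by omega), if_neg (by omega), if_neg (by omega), if_neg (by omega),
    if_neg (by omega), if_neg (by omega), if_neg (by omega), if_neg (by omega),
    if_neg (by omega), if_pos h2]
lemma gg_even {M y} (h8 : 8 ≤ y) (h2 : y % 2 = 0) : gg M y = y + 1 := by
  unfold gg
  rw [if_neg (by omega), if_neg (by omega), if_neg (by omega), if_neg (by omega),
    if_neg (by omega), if_neg (by omega), if_neg (by omega), if_neg (by omega),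
    if_neg (by omega), if_neg (by omega)]

/-! ### eval lemmas for CC -/

lemma CC0 {M} : CC M 0 = 4 := rfl
lemma CC1 {M} : CC M 1 = 2 := rfl
lemma CC2 {M} : CC M 2 = M - 1 := rfl
lemma CC4 {M} : CC M 4 = 5 := rfl
lemma CC5 {M} : CC M 5 = 0 := rfl
lemma CC9 {M} : CC M 9 = 6 := rfl
lemma CC3 {M} (h : M ≠ 8) : CC M 3 = M - 3 := by
  unfold CC
  rw [if_neg (by omega), if_neg (by omega), if_neg (by omega), if_pos rfl, if_neg h]
lemma CC6 {M} (h : M ≠ 8) : CC M 6 = 8 := by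
  unfold CC
  rw [if_neg (by omega), if_neg (by omega), if_neg (by omega), if_neg (by omega),
    if_neg (by omega), if_neg (by omega), if_pos rfl, if_neg h]
lemma CC7 {M} (h8 : M ≠ 8) (h10 : M ≠ 10) : CC M 7 = 10 := by
  unfold CC
  rw [if_neg (by omega), if_neg (by omega), if_neg (by omega), if_neg (by omega),
    if_neg (by omega), if_neg (by omega), if_neg (by omega), if_pos rfl, if_neg h8,
    if_neg h10]
lemma CCM4 {M} (h12 : 12 ≤ M) (hE : M % 2 = 0) : CC M (M - 4) = 1 := by
  unfold CC
  rw [if_neg (by omega), if_neg (by omega), if_neg (by omega), if_neg (by omega),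
    if_neg (by omega), if_neg (by omega), if_neg (by omega), if_neg (by omega),
    if_neg (by omega), if_pos rfl]
lemma CCM2 {M} (h10 : 10 ≤ M) (hE : M % 2 = 0) : CC M (M - 2) = 3 := by
  unfold CC
  rw [if_neg (by omega), if_neg (by omega), if_neg (by omega), if_neg (by omega),
    if_neg (by omega), if_neg (by omega), if_neg (by omega), if_neg (by omega),
    if_neg (by omega), if_neg (by omega), if_pos rfl]
lemma CC_even {M x} (h8 : 8 ≤ x) (h2 : x % 2 = 0) (h4 : x ≠ M - 4) (hm2 : x ≠ M - 2) :
    CC M x = x + 4 := by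
  unfold CC
  rw [if_neg (by omega), if_neg (by omega), if_neg (by omega), if_neg (by omega),
    if_neg (by omega), if_neg (by omega), if_neg (by omega), if_neg (by omega),
    if_neg (by omega), if_neg h4, if_neg hm2, if_pos h2]
lemma CC_odd {M x} (h11 : 11 ≤ x) (h2 : x % 2 = 1) (hE : M % 2 = 0) : CC M x = x - 4 := by
  unfold CC
  rw [if_neg (by omega), if_neg (by omega), if_neg (by omega), if_neg (by omega),
    if_neg (by omega), if_neg (by omega), if_neg (by omega), if_neg (by omega),
    if_neg (by omega), if_neg (by omega), if_neg (by omega), if_neg (by omega)]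

/-! ### eval lemmas for pI -/

lemma pI0 {M} : pI M 0 = 0 := rfl
lemma pI1 {M} : pI M 1 = 1 := rfl
lemma pI2 {M} : pI M 2 = M - 1 := rfl
lemma pI3 {M} : pI M 3 = 2 := rfl
lemma pI4 {M} : pI M 4 = 3 := rfl
lemma pI5 {M} : pI M 5 = M - 2 := rfl
lemma pI6 {M} : pI M 6 = 4 := rfl
lemma pI7 {M} : pI M 7 = 5 := rfl
lemma pI_even {M x} (h8 : 8 ≤ x) (h2 : x % 2 = 0) : pI M x = x - 1 := by
  unfold pI
  rw [if_neg (by omega), if_neg (by omega), if_neg (by omega), if_neg (by omega),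
    if_neg (by omega), if_neg (by omega), if_neg (by omega), if_neg (by omega), if_pos h2]
lemma pI_odd {M x} (h9 : 9 ≤ x) (h2 : x % 2 = 1) : pI M x = x - 3 := by
  unfold pI
  rw [if_neg (by omega), if_neg (by omega), if_neg (by omega), if_neg (by omega),
    if_neg (by omega), if_neg (by omega), if_neg (by omega), if_neg (by omega),
    if_neg (by omega)]

/-! ### eval lemmas for GG -/

lemma GG0 {M} : GG M 0 = 0 := rfl
lemma GG1 {M} : GG M 1 = 1 := rfl
lemma GG2 {M} : GG M 2 = 3 := rfl
lemma GG3 {M} : GG M 3 = 4 := rfl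
lemma GG4 {M} : GG M 4 = 6 := rfl
lemma GG5 {M} : GG M 5 = 7 := rfl
lemma GGM2 {M} (h8 : 8 ≤ M) : GG M (M - 2) = 5 := by
  unfold GG
  rw [if_neg (by omega), if_neg (by omega), if_neg (by omega), if_neg (by omega),
    if_neg (by omega), if_neg (by omega), if_pos rfl]
lemma GGM1 {M} (h8 : 8 ≤ M) : GG M (M - 1) = 2 := by
  unfold GG
  rw [if_neg (by omega), if_neg (by omega), if_neg (by omega), if_neg (by omega),
    if_neg (by omega), if_neg (by omega), if_neg (by omega), if_pos rfl]
lemma GG_even {M k} (h6 : 6 ≤ k) (h2 : k % 2 = 0) (hm2 : k ≠ M - 2) (hE : M % 2 = 0) :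
    GG M k = k + 3 := by
  unfold GG
  rw [if_neg (by omega), if_neg (by omega), if_neg (by omega), if_neg (by omega),
    if_neg (by omega), if_neg (by omega), if_neg hm2, if_neg (by omega), if_pos h2]
lemma GG_odd {M k} (h7 : 7 ≤ k) (h2 : k % 2 = 1) (hm1 : k ≠ M - 1) (hE : M % 2 = 0) :
    GG M k = k + 1 := by
  unfold GG
  rw [if_neg (by omega), if_neg (by omega), if_neg (by omega), if_neg (by omega),
    if_neg (by omega), if_neg (by omega), if_neg (by omega), if_neg hm1, if_neg (by omega)]


/-! ### eval lemmas for dI -/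

lemma dI1 {M} : dI M 1 = 0 := rfl
lemma dI2 {M} : dI M 2 = 1 := rfl
lemma dI3_0 {M} (h4 : M % 4 = 0) : dI M 3 = 3 + (M - 8) / 2 := by
  unfold dI
  rw [if_neg (by omega), if_neg (by omega), if_pos rfl, if_pos h4]
lemma dI3_2 {M} (h4 : M % 4 = 2) : dI M 3 = 5 + (M - 10) / 2 := by
  unfold dI
  rw [if_neg (by omega), if_neg (by omega), if_pos rfl, if_neg (by omega)]
lemma dI6_0 {M} (h4 : M % 4 = 0) : dI M 6 = 4 + 3 * ((M - 8) / 4) := by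
  unfold dI
  rw [if_neg (by omega), if_neg (by omega), if_neg (by omega), if_pos rfl, if_pos h4]
lemma dI6_2 {M} (h4 : M % 4 = 2) : dI M 6 = 3 + (M - 10) / 4 := by
  unfold dI
  rw [if_neg (by omega), if_neg (by omega), if_neg (by omega), if_pos rfl, if_neg (by omega)]
lemma dI_03 {M x} (h4 : M % 4 = 0) (h3 : x % 4 = 3) (hne : x ≠ 3) :
    dI M x = 2 + (M - 1 - x) / 4 := by
  unfold dI
  rw [if_neg (by omega), if_neg (by omega), if_neg hne, if_neg (by omega), if_pos h4,
    if_pos h3]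
lemma dI_02 {M x} (h4 : M % 4 = 0) (h2 : x % 4 = 2) (hne2 : x ≠ 2) (hne6 : x ≠ 6) :
    dI M x = 3 + (M - 8) / 4 + (x - 10) / 4 := by
  unfold dI
  rw [if_neg (by omega), if_neg hne2, if_neg (by omega), if_neg hne6, if_pos h4,
    if_neg (by omega), if_pos h2]
lemma dI_01 {M x} (h4 : M % 4 = 0) (h1 : x % 4 = 1) (hne1 : x ≠ 1) :
    dI M x = 4 + (M - 8) / 2 + (M - 3 - x) / 4 := by
  unfold dI
  rw [if_neg hne1, if_neg (by omega), if_neg (by omega), if_neg (by omega), if_pos h4,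
    if_neg (by omega), if_neg (by omega), if_pos h1]
lemma dI_00 {M x} (h4 : M % 4 = 0) (h0 : x % 4 = 0) :
    dI M x = 5 + 3 * ((M - 8) / 4) + (x - 8) / 4 := by
  unfold dI
  rw [if_neg (by omega), if_neg (by omega), if_neg (by omega), if_neg (by omega), if_pos h4,
    if_neg (by omega), if_neg (by omega), if_neg (by omega)]
lemma dI_21 {M x} (h4 : M % 4 = 2) (h1 : x % 4 = 1) (hne1 : x ≠ 1) :
    dI M x = 2 + (M - 1 - x) / 4 := by
  unfold dI
  rw [if_neg hne1, if_neg (by omega), if_neg (by omega), if_neg (by omega),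
    if_neg (by omega), if_pos h1]
lemma dI_20 {M x} (h4 : M % 4 = 2) (h0 : x % 4 = 0) :
    dI M x = 4 + (M - 10) / 4 + (x - 8) / 4 := by
  unfold dI
  rw [if_neg (by omega), if_neg (by omega), if_neg (by omega), if_neg (by omega),
    if_neg (by omega), if_neg (by omega), if_pos h0]
lemma dI_23 {M x} (h4 : M % 4 = 2) (h3 : x % 4 = 3) (hne3 : x ≠ 3) :
    dI M x = 6 + (M - 10) / 2 + (M - 3 - x) / 4 := by
  unfold dI
  rw [if_neg (by omega), if_neg (by omega), if_neg hne3, if_neg (by omega),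
    if_neg (by omega), if_neg (by omega), if_neg (by omega), if_pos h3]
lemma dI_22 {M x} (h4 : M % 4 = 2) (h2 : x % 4 = 2) (hne2 : x ≠ 2) (hne6 : x ≠ 6) :
    dI M x = 7 + 3 * ((M - 10) / 4) + (x - 10) / 4 := by
  unfold dI
  rw [if_neg (by omega), if_neg hne2, if_neg (by omega), if_neg hne6, if_neg (by omega),
    if_neg (by omega), if_neg (by omega), if_neg (by omega)]

/-! ### eval lemmas for HH -/

lemma HH0 {M} : HH M 0 = 1 := rfl
lemma HH1 {M} : HH M 1 = 2 := rfl
lemma HH_0A {M k} (h4 : M % 4 = 0) (hk2 : 2 ≤ k) (hk : k ≤ 2 + (M - 8) / 4) :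
    HH M k = M - 1 - 4 * (k - 2) := by
  unfold HH
  rw [if_neg (by omega), if_neg (by omega), if_pos h4, if_pos hk]
lemma HH_0B {M k} (h4 : M % 4 = 0) (hlo : 3 + (M - 8) / 4 ≤ k) (hk : k ≤ 2 + (M - 8) / 2) :
    HH M k = 10 + 4 * (k - 3 - (M - 8) / 4) := by
  unfold HH
  rw [if_neg (by omega), if_neg (by omega), if_pos h4, if_neg (by omega), if_pos hk]
lemma HH_0C {M k} (h4 : M % 4 = 0) (hM : 12 ≤ M) (h : k = 3 + (M - 8) / 2) : HH M k = 3 := by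
  unfold HH
  rw [if_neg (by omega), if_neg (by omega), if_pos h4, if_neg (by omega), if_neg (by omega),
    if_pos h]
lemma HH_0D {M k} (h4 : M % 4 = 0) (hM : 12 ≤ M) (hlo : 4 + (M - 8) / 2 ≤ k)
    (hk : k ≤ 3 + 3 * ((M - 8) / 4)) :
    HH M k = M - 3 - 4 * (k - 4 - (M - 8) / 2) := by
  unfold HH
  rw [if_neg (by omega), if_neg (by omega), if_pos h4, if_neg (by omega), if_neg (by omega),
    if_neg (by omega), if_pos hk]
lemma HH_0E {M k} (h4 : M % 4 = 0) (hM : 12 ≤ M) (h : k = 4 + 3 * ((M - 8) / 4)) :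
    HH M k = 6 := by
  unfold HH
  rw [if_neg (by omega), if_neg (by omega), if_pos h4, if_neg (by omega), if_neg (by omega),
    if_neg (by omega), if_neg (by omega), if_pos h]
lemma HH_0F {M k} (h4 : M % 4 = 0) (hM : 12 ≤ M) (hlo : 5 + 3 * ((M - 8) / 4) ≤ k) :
    HH M k = 8 + 4 * (k - 5 - 3 * ((M - 8) / 4)) := by
  unfold HH
  rw [if_neg (by omega), if_neg (by omega), if_pos h4, if_neg (by omega), if_neg (by omega),
    if_neg (by omega), if_neg (by omega), if_neg (by omega)]
lemma HH_2A {M k} (h4 : M % 4 = 2) (hk2 : 2 ≤ k) (hk : k ≤ 2 + (M - 10) / 4) :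
    HH M k = M - 1 - 4 * (k - 2) := by
  unfold HH
  rw [if_neg (by omega), if_neg (by omega), if_neg (by omega), if_pos hk]
lemma HH_2B {M k} (h4 : M % 4 = 2) (h : k = 3 + (M - 10) / 4) : HH M k = 6 := by
  unfold HH
  rw [if_neg (by omega), if_neg (by omega), if_neg (by omega), if_neg (by omega), if_pos h]
lemma HH_2C {M k} (h4 : M % 4 = 2) (hlo : 4 + (M - 10) / 4 ≤ k) (hk : k ≤ 4 + (M - 10) / 2) :
    HH M k = 8 + 4 * (k - 4 - (M - 10) / 4) := by
  unfold HH
  rw [if_neg (by omega), if_neg (by omega), if_neg (by omega), if_neg (by omega),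
    if_neg (by omega), if_pos hk]
lemma HH_2D {M k} (h4 : M % 4 = 2) (hM : 14 ≤ M) (h : k = 5 + (M - 10) / 2) : HH M k = 3 := by
  unfold HH
  rw [if_neg (by omega), if_neg (by omega), if_neg (by omega), if_neg (by omega),
    if_neg (by omega), if_neg (by omega), if_pos h]
lemma HH_2E {M k} (h4 : M % 4 = 2) (hM : 14 ≤ M) (hlo : 6 + (M - 10) / 2 ≤ k)
    (hk : k ≤ 6 + 3 * ((M - 10) / 4)) :
    HH M k = M - 3 - 4 * (k - 6 - (M - 10) / 2) := by
  unfold HH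
  rw [if_neg (by omega), if_neg (by omega), if_neg (by omega), if_neg (by omega),
    if_neg (by omega), if_neg (by omega), if_neg (by omega), if_pos hk]
lemma HH_2F {M k} (h4 : M % 4 = 2) (hM : 14 ≤ M) (hlo : 7 + 3 * ((M - 10) / 4) ≤ k) :
    HH M k = 10 + 4 * (k - 7 - 3 * ((M - 10) / 4)) := by
  unfold HH
  rw [if_neg (by omega), if_neg (by omega), if_neg (by omega), if_neg (by omega),
    if_neg (by omega), if_neg (by omega), if_neg (by omega), if_neg (by omega)]



/-! ### range lemmas -/

lemma ff_lt {M} (h8 : 8 ≤ M) (hE : M % 2 = 0) : ∀ x < M, ff M x < M := by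
  intro x hx
  rcases (by omega : x = 0 ∨ x = 1 ∨ x = 2 ∨ x = 3 ∨ x = 4 ∨ x = 5 ∨ x = 6 ∨
      (M = 8 ∧ x = 7) ∨ (10 ≤ M ∧ x = 7) ∨ (10 ≤ M ∧ x = M - 2) ∨
      (9 ≤ x ∧ x % 2 = 1) ∨ (8 ≤ x ∧ x % 2 = 0 ∧ x ≠ M - 2)) with
    h|h|h|h|h|h|h|⟨h,h'⟩|⟨h,h'⟩|⟨h,h'⟩|⟨h,h'⟩|⟨h,h',h''⟩
  · subst h; rw [ff0]; omega
  · subst h; rw [ff1]; omega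
  · subst h; rw [ff2]; omega
  · subst h; rw [ff3]; omega
  · subst h; rw [ff4]; omega
  · subst h; rw [ff5]; omega
  · subst h; rw [ff6]; omega
  · subst h; subst h'; decide
  · subst h'; rw [ff7 h]; omega
  · subst h'; rw [ffM2 h]; omega
  · rw [ff_odd h hx h' hE]; omega
  · rw [ff_even h hx h' h'']; omega

lemma ff_ne {M} (h8 : 8 ≤ M) (hE : M % 2 = 0) : ∀ x < M, ff M x ≠ x := by
  intro x hx
  rcases (by omega : x = 0 ∨ x = 1 ∨ x = 2 ∨ x = 3 ∨ x = 4 ∨ x = 5 ∨ x = 6 ∨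
      (M = 8 ∧ x = 7) ∨ (10 ≤ M ∧ x = 7) ∨ (10 ≤ M ∧ x = M - 2) ∨
      (9 ≤ x ∧ x % 2 = 1) ∨ (8 ≤ x ∧ x % 2 = 0 ∧ x ≠ M - 2)) with
    h|h|h|h|h|h|h|⟨h,h'⟩|⟨h,h'⟩|⟨h,h'⟩|⟨h,h'⟩|⟨h,h',h''⟩
  · subst h; rw [ff0]; omega
  · subst h; rw [ff1]; omega
  · subst h; rw [ff2]; omega
  · subst h; rw [ff3]; omega
  · subst h; rw [ff4]; omega
  · subst h; rw [ff5]; omega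
  · subst h; rw [ff6]; omega
  · subst h; subst h'; decide
  · subst h'; rw [ff7 h]; omega
  · subst h'; rw [ffM2 h]; omega
  · rw [ff_odd h hx h' hE]; omega
  · rw [ff_even h hx h' h'']; omega

lemma gg_lt {M} (h8 : 8 ≤ M) (hE : M % 2 = 0) : ∀ y < M, gg M y < M := by
  intro y hy
  rcases (by omega : y = 0 ∨ y = 1 ∨ y = 2 ∨ y = 3 ∨ y = 4 ∨ (M = 8 ∧ y = 5) ∨
      (10 ≤ M ∧ y = 5) ∨ y = 6 ∨ y = 7 ∨ y = 9 ∨ (11 ≤ y ∧ y % 2 = 1) ∨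
      (8 ≤ y ∧ y % 2 = 0)) with
    h|h|h|h|h|⟨h,h'⟩|⟨h,h'⟩|h|h|h|⟨h,h'⟩|⟨h,h'⟩
  · subst h; rw [gg0]; omega
  · subst h; rw [gg1]; omega
  · subst h; rw [gg2]; omega
  · subst h; rw [gg3]; omega
  · subst h; rw [gg4]; omega
  · subst h; subst h'; decide
  · subst h'; rw [gg5 (by omega)]; omega
  · subst h; rw [gg6]; omega
  · subst h; rw [gg7]; omega
  · subst h; rw [gg9]; omega
  · rw [gg_odd h h']; omega
  · rw [gg_even h h']; omega

lemma gg_ff {M} (h8 : 8 ≤ M) (hE : M % 2 = 0) : ∀ x < M, gg M (ff M x) = x := by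
  intro x hx
  rcases (by omega : x = 0 ∨ x = 1 ∨ x = 2 ∨ x = 3 ∨ x = 4 ∨ x = 5 ∨ x = 6 ∨
      (M = 8 ∧ x = 7) ∨ (10 ≤ M ∧ x = 7) ∨ (10 ≤ M ∧ x = M - 2) ∨
      (9 ≤ x ∧ x % 2 = 1) ∨ (8 ≤ x ∧ x % 2 = 0 ∧ x ≠ M - 2)) with
    h|h|h|h|h|h|h|⟨h,h'⟩|⟨h,h'⟩|⟨h,h'⟩|⟨h,h'⟩|⟨h,h',h''⟩
  · subst h; rw [ff0, gg1]
  · subst h; rw [ff1, gg3]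
  · subst h; rw [ff2, gg0]
  · subst h; rw [ff3, gg4]
  · subst h; rw [ff4, gg6]
  · subst h; rw [ff5, gg2]
  · subst h; rw [ff6, gg7]
  · subst h; subst h'; decide
  · subst h'; rw [ff7 h, gg9]
  · subst h'; rw [ffM2 h, gg5 (by omega)]
  · rw [ff_odd h hx h' hE, gg_even (by omega) (by omega)]; omega
  · rw [ff_even h hx h' h'', gg_odd (by omega) (by omega)]; omega

lemma ff_gg {M} (h8 : 8 ≤ M) (hE : M % 2 = 0) : ∀ y < M, ff M (gg M y) = y := by
  intro y hy
  rcases (by omega : y = 0 ∨ y = 1 ∨ y = 2 ∨ y = 3 ∨ y = 4 ∨ (M = 8 ∧ y = 5) ∨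
      (10 ≤ M ∧ y = 5) ∨ y = 6 ∨ y = 7 ∨ y = 9 ∨ (11 ≤ y ∧ y % 2 = 1) ∨
      (8 ≤ y ∧ y % 2 = 0)) with
    h|h|h|h|h|⟨h,h'⟩|⟨h,h'⟩|h|h|h|⟨h,h'⟩|⟨h,h'⟩
  · subst h; rw [gg0, ff2]
  · subst h; rw [gg1, ff0]
  · subst h; rw [gg2, ff5]
  · subst h; rw [gg3, ff1]
  · subst h; rw [gg4, ff3]
  · subst h; subst h'; decide
  · subst h'; rw [gg5 (by omega), ffM2 h]
  · subst h; rw [gg6, ff4]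
  · subst h; rw [gg7, ff6]
  · subst h; rw [gg9, ff7 (by omega)]
  · rw [gg_odd h h', ff_even (by omega) (by omega) (by omega) (by omega)]; omega
  · rw [gg_even h h', ff_odd (by omega) (by omega) (by omega) hE]; omega

lemma GG_lt {M} (h8 : 8 ≤ M) (hE : M % 2 = 0) : ∀ k < M, GG M k < M := by
  intro k hk
  rcases (by omega : k = 0 ∨ k = 1 ∨ k = 2 ∨ k = 3 ∨ k = 4 ∨ k = 5 ∨ k = M - 2 ∨
      k = M - 1 ∨ (6 ≤ k ∧ k % 2 = 0 ∧ k ≠ M - 2) ∨ (7 ≤ k ∧ k % 2 = 1 ∧ k ≠ M - 1)) with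
    h|h|h|h|h|h|h|h|⟨h,h',h''⟩|⟨h,h',h''⟩
  · subst h; rw [GG0]; omega
  · subst h; rw [GG1]; omega
  · subst h; rw [GG2]; omega
  · subst h; rw [GG3]; omega
  · subst h; rw [GG4]; omega
  · subst h; rw [GG5]; omega
  · subst h; rw [GGM2 h8]; omega
  · subst h; rw [GGM1 h8]; omega
  · rw [GG_even h h' h'' hE]; omega
  · rw [GG_odd h h' h'' hE]; omega

lemma pI_lt {M} (h8 : 8 ≤ M) : ∀ x < M, pI M x < M := by
  intro x hx
  rcases (by omega : x = 0 ∨ x = 1 ∨ x = 2 ∨ x = 3 ∨ x = 4 ∨ x = 5 ∨ x = 6 ∨ x = 7 ∨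
      (8 ≤ x ∧ x % 2 = 0) ∨ (9 ≤ x ∧ x % 2 = 1)) with
    h|h|h|h|h|h|h|h|⟨h,h'⟩|⟨h,h'⟩
  · subst h; rw [pI0]; omega
  · subst h; rw [pI1]; omega
  · subst h; rw [pI2]; omega
  · subst h; rw [pI3]; omega
  · subst h; rw [pI4]; omega
  · subst h; rw [pI5]; omega
  · subst h; rw [pI6]; omega
  · subst h; rw [pI7]; omega
  · rw [pI_even h h']; omega
  · rw [pI_odd h h']; omega

lemma GG_step {M} (h8 : 8 ≤ M) (hE : M % 2 = 0) :
    ∀ k, k + 1 < M → ff M (GG M k) = GG M (k + 1) := by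
  intro k hk
  rcases (by omega : M = 8 ∨ 10 ≤ M) with hm | hm
  · subst hm
    rcases (by omega : k = 0 ∨ k = 1 ∨ k = 2 ∨ k = 3 ∨ k = 4 ∨ k = 5 ∨ k = 6) with
      h|h|h|h|h|h|h <;> subst h <;> decide
  rcases (by omega : k = 0 ∨ k = 1 ∨ k = 2 ∨ k = 3 ∨ k = 4 ∨ k = 5 ∨
      (6 ≤ k ∧ k % 2 = 0 ∧ k ≤ M - 4) ∨ (7 ≤ k ∧ k % 2 = 1 ∧ k = M - 3) ∨
      (7 ≤ k ∧ k % 2 = 1 ∧ k ≤ M - 5) ∨ k = M - 2) with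
    h|h|h|h|h|h|⟨h,h',h''⟩|⟨h,h',h''⟩|⟨h,h',h''⟩|h
  · subst h; rw [GG0, ff0, GG1]
  · subst h; rw [GG1, ff1, GG2]
  · subst h; rw [GG2, ff3, GG3]
  · subst h; rw [GG3, ff4, GG4]
  · subst h; rw [GG4, ff6, GG5]
  · subst h; rw [GG5, ff7 hm, GG_even (by omega) (by omega) (by omega) hE]
  · rw [GG_even h h' (by omega) hE, ff_odd (by omega) (by omega) (by omega) hE,
      GG_odd (by omega) (by omega) (by omega) hE]
    omega
  · rw [GG_odd h h' (by omega) hE, show k + 1 = M - 2 by omega, ffM2 hm, GGM2 h8]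
  · rw [GG_odd h h' (by omega) hE, ff_even (by omega) (by omega) (by omega) (by omega),
      GG_even (by omega) (by omega) (by omega) hE]
  · subst h; rw [GGM2 h8, ff5, show M - 2 + 1 = M - 1 by omega, GGM1 h8]

lemma GG_pI {M} (h8 : 8 ≤ M) (hE : M % 2 = 0) : ∀ x < M, GG M (pI M x) = x := by
  intro x hx
  rcases (by omega : x = 0 ∨ x = 1 ∨ x = 2 ∨ x = 3 ∨ x = 4 ∨ x = 5 ∨ x = 6 ∨ x = 7 ∨
      (8 ≤ x ∧ x % 2 = 0) ∨ (9 ≤ x ∧ x % 2 = 1)) with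
    h|h|h|h|h|h|h|h|⟨h,h'⟩|⟨h,h'⟩
  · subst h; rw [pI0, GG0]
  · subst h; rw [pI1, GG1]
  · subst h; rw [pI2, GGM1 h8]
  · subst h; rw [pI3, GG2]
  · subst h; rw [pI4, GG3]
  · subst h; rw [pI5, GGM2 h8]
  · subst h; rw [pI6, GG4]
  · subst h; rw [pI7, GG5]
  · rw [pI_even h h', GG_odd (by omega) (by omega) (by omega) hE]; omega
  · rw [pI_odd h h', GG_even (by omega) (by omega) (by omega) hE]; omega

lemma CC_lt {M} (h8 : 8 ≤ M) (hE : M % 2 = 0) : ∀ x < M, CC M x < M := by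
  intro x hx
  rcases (by omega : M = 8 ∨ M = 10 ∨ 12 ≤ M) with hm | hm | hm
  · subst hm; interval_cases x <;> decide
  · subst hm; interval_cases x <;> decide
  rcases (by omega : x = 0 ∨ x = 1 ∨ x = 2 ∨ x = 3 ∨ x = 4 ∨ x = 5 ∨ x = 6 ∨ x = 7 ∨
      x = 9 ∨ x = M - 4 ∨ x = M - 2 ∨ (8 ≤ x ∧ x % 2 = 0 ∧ x ≠ M - 4 ∧ x ≠ M - 2) ∨
      (11 ≤ x ∧ x % 2 = 1)) with
    h|h|h|h|h|h|h|h|h|h|h|⟨h,h',h'',h'''⟩|⟨h,h'⟩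
  · subst h; rw [CC0]; omega
  · subst h; rw [CC1]; omega
  · subst h; rw [CC2]; omega
  · subst h; rw [CC3 (by omega)]; omega
  · subst h; rw [CC4]; omega
  · subst h; rw [CC5]; omega
  · subst h; rw [CC6 (by omega)]; omega
  · subst h; rw [CC7 (by omega) (by omega)]; omega
  · subst h; rw [CC9]; omega
  · subst h; rw [CCM4 hm hE]; omega
  · subst h; rw [CCM2 (by omega) hE]; omega
  · rw [CC_even h h' h'' h''']; omega
  · rw [CC_odd h h' hE]; omega

lemma CC_moved {M} (h8 : 8 ≤ M) (hE : M % 2 = 0) : ∀ x < M, x ≠ 0 → x ≠ 4 → x ≠ 5 →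
    CC M x ≠ x ∧ CC M x ≠ 0 ∧ CC M x ≠ 4 ∧ CC M x ≠ 5 ∧ CC M x < M := by
  intro x hx h0 h4 h5
  rcases (by omega : M = 8 ∨ M = 10 ∨ 12 ≤ M) with hm | hm | hm
  · subst hm; interval_cases x <;> first | omega | decide
  · subst hm; interval_cases x <;> first | omega | decide
  rcases (by omega : x = 1 ∨ x = 2 ∨ x = 3 ∨ x = 6 ∨ x = 7 ∨
      x = 9 ∨ x = M - 4 ∨ x = M - 2 ∨ (8 ≤ x ∧ x % 2 = 0 ∧ x ≠ M - 4 ∧ x ≠ M - 2) ∨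
      (11 ≤ x ∧ x % 2 = 1)) with
    h|h|h|h|h|h|h|h|⟨h,h',h'',h'''⟩|⟨h,h'⟩
  · subst h; rw [CC1]; omega
  · subst h; rw [CC2]; omega
  · subst h; rw [CC3 (by omega)]; omega
  · subst h; rw [CC6 (by omega)]; omega
  · subst h; rw [CC7 (by omega) (by omega)]; omega
  · subst h; rw [CC9]; omega
  · subst h; rw [CCM4 hm hE]; omega
  · subst h; rw [CCM2 (by omega) hE]; omega
  · rw [CC_even h h' h'' h''']; omega
  · rw [CC_odd h h' hE]; omega

lemma CC045 {M} (h8 : 8 ≤ M) : CC M 0 = 4 ∧ CC M 4 = 5 ∧ CC M 5 = 0 :=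
  ⟨rfl, rfl, rfl⟩



/-! ### orbit lemmas for the n-cycle -/

lemma HH_step {M} (h8 : 8 ≤ M) (hE : M % 2 = 0) :
    ∀ k, k + 1 < M - 3 → CC M (HH M k) = HH M (k + 1) := by
  intro k hk
  rcases (by omega : M = 8 ∨ M = 10 ∨ (12 ≤ M ∧ M % 4 = 0) ∨ (14 ≤ M ∧ M % 4 = 2)) with
    hm | hm | ⟨hm, h4⟩ | ⟨hm, h4⟩
  · subst hm
    rcases (by omega : k = 0 ∨ k = 1 ∨ k = 2 ∨ k = 3) with h|h|h|h <;> subst h <;> decide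
  · subst hm
    rcases (by omega : k = 0 ∨ k = 1 ∨ k = 2 ∨ k = 3 ∨ k = 4 ∨ k = 5) with
      h|h|h|h|h|h <;> subst h <;> decide
  · rcases (by omega : k = 0 ∨ k = 1 ∨ (2 ≤ k ∧ k ≤ 1 + (M - 8) / 4) ∨ k = 2 + (M - 8) / 4 ∨
        (3 + (M - 8) / 4 ≤ k ∧ k ≤ 1 + (M - 8) / 2) ∨ k = 2 + (M - 8) / 2 ∨
        k = 3 + (M - 8) / 2 ∨ (4 + (M - 8) / 2 ≤ k ∧ k ≤ 2 + 3 * ((M - 8) / 4)) ∨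
        k = 3 + 3 * ((M - 8) / 4) ∨ k = 4 + 3 * ((M - 8) / 4) ∨
        5 + 3 * ((M - 8) / 4) ≤ k) with
      h|h|⟨h,h'⟩|h|⟨h,h'⟩|h|h|⟨h,h'⟩|h|h|h
    · subst h; rw [HH0, CC1, HH1]
    · subst h; rw [HH1, CC2, HH_0A h4 (by omega) (by omega)]; omega
    · rw [HH_0A h4 (by omega) (by omega), CC_odd (by omega) (by omega) hE,
        HH_0A h4 (by omega) (by omega)]
      omega
    · rw [HH_0A h4 (by omega) (by omega),
        show M - 1 - 4 * (k - 2) = 7 by omega, CC7 (by omega) (by omega),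
        HH_0B h4 (by omega) (by omega)]
      omega
    · rw [HH_0B h4 (by omega) (by omega),
        CC_even (by omega) (by omega) (by omega) (by omega),
        HH_0B h4 (by omega) (by omega)]
      omega
    · rw [HH_0B h4 (by omega) (by omega),
        show 10 + 4 * (k - 3 - (M - 8) / 4) = M - 2 by omega, CCM2 (by omega) hE,
        HH_0C h4 hm (by omega)]
    · rw [HH_0C h4 hm h, CC3 (by omega), HH_0D h4 hm (by omega) (by omega)]; omega
    · rw [HH_0D h4 hm (by omega) (by omega), CC_odd (by omega) (by omega) hE,
        HH_0D h4 hm (by omega) (by omega)]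
      omega
    · rw [HH_0D h4 hm (by omega) (by omega),
        show M - 3 - 4 * (k - 4 - (M - 8) / 2) = 9 by omega, CC9, HH_0E h4 hm (by omega)]
    · rw [HH_0E h4 hm h, CC6 (by omega), HH_0F h4 hm (by omega)]; omega
    · rw [HH_0F h4 hm (by omega), CC_even (by omega) (by omega) (by omega) (by omega),
        HH_0F h4 hm (by omega)]
      omega
  · rcases (by omega : k = 0 ∨ k = 1 ∨ (2 ≤ k ∧ k ≤ 1 + (M - 10) / 4) ∨
        k = 2 + (M - 10) / 4 ∨ k = 3 + (M - 10) / 4 ∨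
        (4 + (M - 10) / 4 ≤ k ∧ k ≤ 3 + (M - 10) / 2) ∨ k = 4 + (M - 10) / 2 ∨
        k = 5 + (M - 10) / 2 ∨ (6 + (M - 10) / 2 ≤ k ∧ k ≤ 5 + 3 * ((M - 10) / 4)) ∨
        k = 6 + 3 * ((M - 10) / 4) ∨ 7 + 3 * ((M - 10) / 4) ≤ k) with
      h|h|⟨h,h'⟩|h|h|⟨h,h'⟩|h|h|⟨h,h'⟩|h|h
    · subst h; rw [HH0, CC1, HH1]
    · subst h; rw [HH1, CC2, HH_2A h4 (by omega) (by omega)]; omega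
    · rw [HH_2A h4 (by omega) (by omega), CC_odd (by omega) (by omega) hE,
        HH_2A h4 (by omega) (by omega)]
      omega
    · rw [HH_2A h4 (by omega) (by omega),
        show M - 1 - 4 * (k - 2) = 9 by omega, CC9, HH_2B h4 (by omega)]
    · rw [HH_2B h4 h, CC6 (by omega), HH_2C h4 (by omega) (by omega)]; omega
    · rw [HH_2C h4 (by omega) (by omega),
        CC_even (by omega) (by omega) (by omega) (by omega),
        HH_2C h4 (by omega) (by omega)]
      omega
    · rw [HH_2C h4 (by omega) (by omega),
        show 8 + 4 * (k - 4 - (M - 10) / 4) = M - 2 by omega, CCM2 (by omega) hE,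
        HH_2D h4 hm (by omega)]
    · rw [HH_2D h4 hm h, CC3 (by omega), HH_2E h4 hm (by omega) (by omega)]; omega
    · rw [HH_2E h4 hm (by omega) (by omega), CC_odd (by omega) (by omega) hE,
        HH_2E h4 hm (by omega) (by omega)]
      omega
    · rw [HH_2E h4 hm (by omega) (by omega),
        show M - 3 - 4 * (k - 6 - (M - 10) / 2) = 7 by omega, CC7 (by omega) (by omega),
        HH_2F h4 hm (by omega)]
      omega
    · rw [HH_2F h4 hm (by omega), CC_even (by omega) (by omega) (by omega) (by omega),
        HH_2F h4 hm (by omega)]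
      omega

lemma HH_dI {M} (h8 : 8 ≤ M) (hE : M % 2 = 0) : ∀ x < M, x ≠ 0 → x ≠ 4 → x ≠ 5 →
    HH M (dI M x) = x := by
  intro x hx h0 h4' h5
  rcases (by omega : M = 8 ∨ M = 10 ∨ (12 ≤ M ∧ M % 4 = 0) ∨ (14 ≤ M ∧ M % 4 = 2)) with
    hm | hm | ⟨hm, h4⟩ | ⟨hm, h4⟩
  · subst hm; interval_cases x <;> first | omega | decide
  · subst hm; interval_cases x <;> first | omega | decide
  · rcases (by omega : x = 1 ∨ x = 2 ∨ x = 3 ∨ x = 6 ∨ (x % 4 = 3 ∧ x ≠ 3) ∨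
        (x % 4 = 2 ∧ x ≠ 2 ∧ x ≠ 6) ∨ (x % 4 = 1 ∧ x ≠ 1) ∨ x % 4 = 0) with
      h|h|h|h|⟨h,h'⟩|⟨h,h',h''⟩|⟨h,h'⟩|h
    · subst h; rw [dI1, HH0]
    · subst h; rw [dI2, HH1]
    · subst h; rw [dI3_0 h4, HH_0C h4 hm rfl]
    · subst h; rw [dI6_0 h4, HH_0E h4 hm rfl]
    · rw [dI_03 h4 h h', HH_0A h4 (by omega) (by omega)]; omega
    · rw [dI_02 h4 h h' h'', HH_0B h4 (by omega) (by omega)]; omega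
    · rw [dI_01 h4 h h', HH_0D h4 hm (by omega) (by omega)]; omega
    · rw [dI_00 h4 h, HH_0F h4 hm (by omega)]; omega
  · rcases (by omega : x = 1 ∨ x = 2 ∨ x = 3 ∨ x = 6 ∨ (x % 4 = 1 ∧ x ≠ 1) ∨
        (x % 4 = 0) ∨ (x % 4 = 3 ∧ x ≠ 3) ∨ (x % 4 = 2 ∧ x ≠ 2 ∧ x ≠ 6)) with
      h|h|h|h|⟨h,h'⟩|h|⟨h,h'⟩|⟨h,h',h''⟩
    · subst h; rw [dI1, HH0]
    · subst h; rw [dI2, HH1]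
    · subst h; rw [dI3_2 h4, HH_2D h4 hm rfl]
    · subst h; rw [dI6_2 h4, HH_2B h4 rfl]
    · rw [dI_21 h4 h h', HH_2A h4 (by omega) (by omega)]; omega
    · rw [dI_20 h4 h, HH_2C h4 (by omega) (by omega)]; omega
    · rw [dI_23 h4 h h', HH_2E h4 hm (by omega) (by omega)]; omega
    · rw [dI_22 h4 h h' h'', HH_2F h4 hm (by omega)]; omega

lemma dI_lt {M} (h8 : 8 ≤ M) (hE : M % 2 = 0) : ∀ x < M, x ≠ 0 → x ≠ 4 → x ≠ 5 →
    dI M x < M - 3 := by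
  intro x hx h0 h4' h5
  rcases (by omega : M = 8 ∨ M = 10 ∨ (12 ≤ M ∧ M % 4 = 0) ∨ (14 ≤ M ∧ M % 4 = 2)) with
    hm | hm | ⟨hm, h4⟩ | ⟨hm, h4⟩
  · subst hm; interval_cases x <;> first | omega | decide
  · subst hm; interval_cases x <;> first | omega | decide
  · rcases (by omega : x = 1 ∨ x = 2 ∨ x = 3 ∨ x = 6 ∨ (x % 4 = 3 ∧ x ≠ 3) ∨
        (x % 4 = 2 ∧ x ≠ 2 ∧ x ≠ 6) ∨ (x % 4 = 1 ∧ x ≠ 1) ∨ x % 4 = 0) with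
      h|h|h|h|⟨h,h'⟩|⟨h,h',h''⟩|⟨h,h'⟩|h
    · subst h; rw [dI1]; omega
    · subst h; rw [dI2]; omega
    · subst h; rw [dI3_0 h4]; omega
    · subst h; rw [dI6_0 h4]; omega
    · rw [dI_03 h4 h h']; omega
    · rw [dI_02 h4 h h' h'']; omega
    · rw [dI_01 h4 h h']; omega
    · rw [dI_00 h4 h]; omega
  · rcases (by omega : x = 1 ∨ x = 2 ∨ x = 3 ∨ x = 6 ∨ (x % 4 = 1 ∧ x ≠ 1) ∨
        (x % 4 = 0) ∨ (x % 4 = 3 ∧ x ≠ 3) ∨ (x % 4 = 2 ∧ x ≠ 2 ∧ x ≠ 6)) with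
      h|h|h|h|⟨h,h'⟩|h|⟨h,h'⟩|⟨h,h',h''⟩
    · subst h; rw [dI1]; omega
    · subst h; rw [dI2]; omega
    · subst h; rw [dI3_2 h4]; omega
    · subst h; rw [dI6_2 h4]; omega
    · rw [dI_21 h4 h h']; omega
    · rw [dI_20 h4 h]; omega
    · rw [dI_23 h4 h h']; omega
    · rw [dI_22 h4 h h' h'']; omega

lemma HH_moved {M} (h8 : 8 ≤ M) (hE : M % 2 = 0) : ∀ k < M - 3,
    HH M k < M ∧ HH M k ≠ 0 ∧ HH M k ≠ 4 ∧ HH M k ≠ 5 := by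
  intro k hk
  rcases (by omega : M = 8 ∨ M = 10 ∨ (12 ≤ M ∧ M % 4 = 0) ∨ (14 ≤ M ∧ M % 4 = 2)) with
    hm | hm | ⟨hm, h4⟩ | ⟨hm, h4⟩
  · subst hm
    rcases (by omega : k = 0 ∨ k = 1 ∨ k = 2 ∨ k = 3 ∨ k = 4) with h|h|h|h|h <;>
      subst h <;> decide
  · subst hm
    rcases (by omega : k = 0 ∨ k = 1 ∨ k = 2 ∨ k = 3 ∨ k = 4 ∨ k = 5 ∨ k = 6) with
      h|h|h|h|h|h|h <;> subst h <;> decide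
  · rcases (by omega : k = 0 ∨ k = 1 ∨ (2 ≤ k ∧ k ≤ 2 + (M - 8) / 4) ∨
        (3 + (M - 8) / 4 ≤ k ∧ k ≤ 2 + (M - 8) / 2) ∨ k = 3 + (M - 8) / 2 ∨
        (4 + (M - 8) / 2 ≤ k ∧ k ≤ 3 + 3 * ((M - 8) / 4)) ∨ k = 4 + 3 * ((M - 8) / 4) ∨
        5 + 3 * ((M - 8) / 4) ≤ k) with
      h|h|⟨h,h'⟩|⟨h,h'⟩|h|⟨h,h'⟩|h|h
    · subst h; rw [HH0]; omega
    · subst h; rw [HH1]; omega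
    · rw [HH_0A h4 h h']; omega
    · rw [HH_0B h4 h h']; omega
    · rw [HH_0C h4 hm h]; omega
    · rw [HH_0D h4 hm h h']; omega
    · rw [HH_0E h4 hm h]; omega
    · rw [HH_0F h4 hm h]; omega
  · rcases (by omega : k = 0 ∨ k = 1 ∨ (2 ≤ k ∧ k ≤ 2 + (M - 10) / 4) ∨
        k = 3 + (M - 10) / 4 ∨ (4 + (M - 10) / 4 ≤ k ∧ k ≤ 4 + (M - 10) / 2) ∨
        k = 5 + (M - 10) / 2 ∨ (6 + (M - 10) / 2 ≤ k ∧ k ≤ 6 + 3 * ((M - 10) / 4)) ∨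
        7 + 3 * ((M - 10) / 4) ≤ k) with
      h|h|⟨h,h'⟩|h|⟨h,h'⟩|h|⟨h,h'⟩|h
    · subst h; rw [HH0]; omega
    · subst h; rw [HH1]; omega
    · rw [HH_2A h4 h h']; omega
    · rw [HH_2B h4 h]; omega
    · rw [HH_2C h4 h h']; omega
    · rw [HH_2D h4 hm h]; omega
    · rw [HH_2E h4 hm h h']; omega
    · rw [HH_2F h4 hm h]; omega



/-! ### the commutator bridge on ℕ -/

lemma shiftC {M} (h8 : 8 ≤ M) (hE : M % 2 = 0) : ∀ v < M,
    (if CC M v + 1 = M then 0 else CC M v + 1)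
      = gg M (if ff M v + 1 = M then 0 else ff M v + 1) := by
  intro v hv
  rcases (by omega : M = 8 ∨ M = 10 ∨ 12 ≤ M) with hm | hm | hm
  · subst hm; interval_cases v <;> decide
  · subst hm; interval_cases v <;> decide
  rcases (by omega : v = 0 ∨ v = 1 ∨ v = 2 ∨ v = 3 ∨ v = 4 ∨ v = 5 ∨ v = 6 ∨ v = 7 ∨
      v = 9 ∨ v = M - 4 ∨ v = M - 2 ∨ (8 ≤ v ∧ v % 2 = 0 ∧ v ≠ M - 4 ∧ v ≠ M - 2) ∨
      (11 ≤ v ∧ v % 2 = 1)) with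
    h|h|h|h|h|h|h|h|h|h|h|⟨h,h',h'',h'''⟩|⟨h,h'⟩
  · subst h; rw [CC0, ff0, if_neg (by omega), if_neg (by omega)]; norm_num; rw [gg2]
  · subst h; rw [CC1, ff1, if_neg (by omega), if_neg (by omega)]; norm_num; rw [gg4]
  · subst h; rw [CC2, ff2, if_pos (by omega), if_neg (by omega)]; norm_num; rw [gg1]
  · subst h
    rw [CC3 (by omega), ff3, if_neg (by omega), if_neg (by omega)]
    norm_num; rw [gg5 (by omega)]; omega
  · subst h; rw [CC4, ff4, if_neg (by omega), if_neg (by omega)]; norm_num; rw [gg7]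
  · subst h; rw [CC5, ff5, if_neg (by omega), if_neg (by omega)]; norm_num; rw [gg3]
  · subst h
    rw [CC6 (by omega), ff6, if_neg (by omega), if_neg (by omega)]
    norm_num; rw [gg_even (by omega) (by omega)]
  · subst h
    rw [CC7 (by omega) (by omega), ff7 (by omega), if_neg (by omega), if_neg (by omega)]
    norm_num; rw [gg_even (by omega) (by omega)]
  · subst h
    rw [CC9, ff_odd (by omega) (by omega) (by omega) hE, if_neg (by omega),
      if_neg (by omega)]
    norm_num; rw [gg9]
  · subst h
    rw [CCM4 (by omega) hE, ff_even (by omega) (by omega) (by omega) (by omega),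
      if_neg (by omega), if_pos (by omega)]
    norm_num; rw [gg0]
  · subst h
    rw [CCM2 (by omega) hE, ffM2 (by omega), if_neg (by omega), if_neg (by omega)]
    norm_num; rw [gg6]
  · rw [CC_even h h' h'' h''', ff_even (by omega) (by omega) (by omega) (by omega),
      if_neg (by omega), if_neg (by omega), gg_even (by omega) (by omega)]
  · rw [CC_odd h h' hE, ff_odd (by omega) (by omega) (by omega) hE,
      if_neg (by omega), if_neg (by omega), gg_odd (by omega) (by omega)]
    omega

/-! ### the permutations -/

def piPerm (M : ℕ) (h8 : 8 ≤ M) (hE : M % 2 = 0) : Equiv.Perm (Fin M) where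
  toFun x := ⟨ff M x.1, ff_lt h8 hE x.1 x.2⟩
  invFun y := ⟨gg M y.1, gg_lt h8 hE y.1 y.2⟩
  left_inv x := Fin.ext (gg_ff h8 hE x.1 x.2)
  right_inv y := Fin.ext (ff_gg h8 hE y.1 y.2)

def tf (x : ℕ) : ℕ := if x = 0 then 4 else if x = 4 then 5 else if x = 5 then 0 else x
def tg (x : ℕ) : ℕ := if x = 0 then 5 else if x = 4 then 0 else if x = 5 then 4 else x

lemma tf0 : tf 0 = 4 := rfl
lemma tf4 : tf 4 = 5 := rfl
lemma tf5 : tf 5 = 0 := rfl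
lemma tf_other {x} (h0 : x ≠ 0) (h4 : x ≠ 4) (h5 : x ≠ 5) : tf x = x := by
  unfold tf; rw [if_neg h0, if_neg h4, if_neg h5]
lemma tg_other {x} (h0 : x ≠ 0) (h4 : x ≠ 4) (h5 : x ≠ 5) : tg x = x := by
  unfold tg; rw [if_neg h0, if_neg h4, if_neg h5]

lemma tf_lt {M} (h8 : 8 ≤ M) : ∀ x < M, tf x < M := by
  intro x hx
  rcases (by omega : x = 0 ∨ x = 4 ∨ x = 5 ∨ (x ≠ 0 ∧ x ≠ 4 ∧ x ≠ 5)) with h|h|h|⟨h,h',h''⟩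
  · subst h; rw [tf0]; omega
  · subst h; rw [tf4]; omega
  · subst h; rw [tf5]; omega
  · rw [tf_other h h' h'']; omega
lemma tg_lt {M} (h8 : 8 ≤ M) : ∀ x < M, tg x < M := by
  intro x hx
  rcases (by omega : x = 0 ∨ x = 4 ∨ x = 5 ∨ (x ≠ 0 ∧ x ≠ 4 ∧ x ≠ 5)) with h|h|h|⟨h,h',h''⟩
  · subst h; show 5 < M; omega
  · subst h; show 0 < M; omega
  · subst h; show 4 < M; omega
  · rw [tg_other h h' h'']; omega
lemma tg_tf : ∀ x, tg (tf x) = x := by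
  intro x
  rcases (em (x = 0)) with h | h0
  · subst h; rfl
  rcases (em (x = 4)) with h | h4
  · subst h; rfl
  rcases (em (x = 5)) with h | h5
  · subst h; rfl
  rw [tf_other h0 h4 h5, tg_other h0 h4 h5]
lemma tf_tg : ∀ x, tf (tg x) = x := by
  intro x
  rcases (em (x = 0)) with h | h0
  · subst h; rfl
  rcases (em (x = 4)) with h | h4
  · subst h; rfl
  rcases (em (x = 5)) with h | h5
  · subst h; rfl
  rw [tg_other h0 h4 h5, tf_other h0 h4 h5]

def tPerm (M : ℕ) (h8 : 8 ≤ M) : Equiv.Perm (Fin M) where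
  toFun x := ⟨tf x.1, tf_lt h8 x.1 x.2⟩
  invFun y := ⟨tg y.1, tg_lt h8 y.1 y.2⟩
  left_inv x := Fin.ext (tg_tf x.1)
  right_inv y := Fin.ext (tf_tg y.1)

lemma isCycle_orbit {α : Type*} [DecidableEq α] [Fintype α] (σ : Equiv.Perm α) (x₀ : α)
    (h1 : σ x₀ ≠ x₀) (h2 : ∀ y, σ y ≠ y → ∃ k : ℕ, (σ ^ k) x₀ = y) : σ.IsCycle :=
  ⟨x₀, h1, fun y hy => by
    obtain ⟨k, hk⟩ := h2 y hy
    exact ⟨(k : ℤ), by rwa [zpow_natCast]⟩⟩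

lemma rot_apply {n : ℕ} (w : Fin (n + 3)) :
    finRotate (n + 3) w = ⟨if w.1 + 1 = n + 3 then 0 else w.1 + 1,
      by have := w.2; split_ifs <;> omega⟩ := by
  have hw := w.2
  rw [finRotate_succ_apply]
  apply Fin.ext
  rw [Fin.val_add, Fin.val_one']
  have h1 : (1 : ℕ) % (n + 3) = 1 := Nat.mod_eq_of_lt (by omega)
  rw [h1]
  show (w.1 + 1) % (n + 2 + 1) = if w.1 + 1 = n + 3 then 0 else w.1 + 1
  by_cases h : w.1 + 1 = n + 3
  · rw [if_pos h, h]; exact Nat.mod_self _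
  · rw [if_neg h]; exact Nat.mod_eq_of_lt (by omega)

lemma piPerm_apply {M} (h8 : 8 ≤ M) (hE : M % 2 = 0) (x : Fin M) :
    piPerm M h8 hE x = ⟨ff M x.1, ff_lt h8 hE x.1 x.2⟩ := rfl

lemma piPerm_inv_apply {M} (h8 : 8 ≤ M) (hE : M % 2 = 0) (y : Fin M) :
    (piPerm M h8 hE)⁻¹ y = ⟨gg M y.1, gg_lt h8 hE y.1 y.2⟩ := rfl

lemma comm_apply {n : ℕ} (h8 : 8 ≤ n + 3) (hE : (n + 3) % 2 = 0) (x : Fin (n + 3)) :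
    ((finRotate (n + 3))⁻¹ * (piPerm (n + 3) h8 hE)⁻¹ * finRotate (n + 3) *
      piPerm (n + 3) h8 hE) x = ⟨CC (n + 3) x.1, CC_lt h8 hE x.1 x.2⟩ := by
  rw [Equiv.Perm.mul_apply, Equiv.Perm.mul_apply, Equiv.Perm.mul_apply, piPerm_apply,
    rot_apply, piPerm_inv_apply, Equiv.Perm.inv_def, Equiv.symm_apply_eq, rot_apply]
  exact Fin.ext (shiftC h8 hE x.1 x.2).symm



/-! ### cycle structure of piPerm -/

lemma piPow {n : ℕ} (h8 : 8 ≤ n + 3) (hE : (n + 3) % 2 = 0) :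
    ∀ j, j < n + 3 → ((piPerm (n + 3) h8 hE ^ j) ⟨0, by omega⟩ : Fin (n + 3)).1
      = GG (n + 3) j := by
  intro j
  induction j with
  | zero => intro _; rw [pow_zero, Equiv.Perm.one_apply]; exact GG0.symm
  | succ j ih =>
    intro hj
    have hj' : j < n + 3 := by omega
    have hmk : (piPerm (n + 3) h8 hE ^ j) ⟨0, by omega⟩ = ⟨GG (n + 3) j, GG_lt h8 hE j hj'⟩ :=
      Fin.ext (ih hj')
    rw [pow_succ', Equiv.Perm.mul_apply, hmk, piPerm_apply]
    exact GG_step h8 hE j hj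

lemma piPerm_isCycle {n : ℕ} (h8 : 8 ≤ n + 3) (hE : (n + 3) % 2 = 0) :
    (piPerm (n + 3) h8 hE).IsCycle := by
  apply isCycle_orbit _ ⟨0, by omega⟩
  · rw [show piPerm (n + 3) h8 hE ⟨0, by omega⟩ = ⟨1, by omega⟩ from Fin.ext rfl]
    intro hcon
    exact (by omega : (1 : ℕ) ≠ 0) (congrArg Fin.val hcon)
  · intro y _
    refine ⟨pI (n + 3) y.1, Fin.ext ?_⟩
    exact (piPow h8 hE _ (pI_lt h8 y.1 y.2)).trans (GG_pI h8 hE y.1 y.2)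

lemma piPerm_support_card {n : ℕ} (h8 : 8 ≤ n + 3) (hE : (n + 3) % 2 = 0) :
    (piPerm (n + 3) h8 hE).support.card = n + 3 := by
  have huniv : (piPerm (n + 3) h8 hE).support = Finset.univ := by
    apply Finset.eq_univ_iff_forall.mpr
    intro x
    rw [Equiv.Perm.mem_support]
    intro hcon
    exact ff_ne h8 hE x.1 x.2 (congrArg Fin.val hcon)
  rw [huniv, Finset.card_univ, Fintype.card_fin]

/-! ### cycle type of the commutator -/

def commPerm (n : ℕ) (h8 : 8 ≤ n + 3) (hE : (n + 3) % 2 = 0) : Equiv.Perm (Fin (n + 3)) :=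
  (finRotate (n + 3))⁻¹ * (piPerm (n + 3) h8 hE)⁻¹ * finRotate (n + 3) * piPerm (n + 3) h8 hE

def dPerm (n : ℕ) (h8 : 8 ≤ n + 3) (hE : (n + 3) % 2 = 0) : Equiv.Perm (Fin (n + 3)) :=
  (tPerm (n + 3) h8)⁻¹ * commPerm n h8 hE

lemma commPerm_apply {n : ℕ} (h8 : 8 ≤ n + 3) (hE : (n + 3) % 2 = 0) (x : Fin (n + 3)) :
    commPerm n h8 hE x = ⟨CC (n + 3) x.1, CC_lt h8 hE x.1 x.2⟩ :=
  comm_apply h8 hE x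

lemma tPerm_inv_apply {n : ℕ} (h8 : 8 ≤ n + 3) (y : Fin (n + 3)) :
    (tPerm (n + 3) h8)⁻¹ y = ⟨tg y.1, tg_lt h8 y.1 y.2⟩ := rfl

lemma dPerm_fix0 {n : ℕ} (h8 : 8 ≤ n + 3) (hE : (n + 3) % 2 = 0) :
    dPerm n h8 hE ⟨0, by omega⟩ = ⟨0, by omega⟩ := by
  unfold dPerm
  rw [Equiv.Perm.mul_apply, commPerm_apply h8 hE, tPerm_inv_apply]
  exact Fin.ext rfl

lemma dPerm_fix4 {n : ℕ} (h8 : 8 ≤ n + 3) (hE : (n + 3) % 2 = 0) :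
    dPerm n h8 hE ⟨4, by omega⟩ = ⟨4, by omega⟩ := by
  unfold dPerm
  rw [Equiv.Perm.mul_apply, commPerm_apply h8 hE, tPerm_inv_apply]
  exact Fin.ext rfl

lemma dPerm_fix5 {n : ℕ} (h8 : 8 ≤ n + 3) (hE : (n + 3) % 2 = 0) :
    dPerm n h8 hE ⟨5, by omega⟩ = ⟨5, by omega⟩ := by
  unfold dPerm
  rw [Equiv.Perm.mul_apply, commPerm_apply h8 hE, tPerm_inv_apply]
  exact Fin.ext rfl

lemma dPerm_apply {n : ℕ} (h8 : 8 ≤ n + 3) (hE : (n + 3) % 2 = 0) (v : ℕ) (hv : v < n + 3)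
    (h0 : v ≠ 0) (h4 : v ≠ 4) (h5 : v ≠ 5) :
    dPerm n h8 hE ⟨v, hv⟩ = ⟨CC (n + 3) v, CC_lt h8 hE v hv⟩ := by
  obtain ⟨hne, hc0, hc4, hc5, hlt⟩ := CC_moved h8 hE v hv h0 h4 h5
  unfold dPerm
  rw [Equiv.Perm.mul_apply, commPerm_apply h8 hE, tPerm_inv_apply]
  exact Fin.ext (tg_other hc0 hc4 hc5)

lemma dPow {n : ℕ} (h8 : 8 ≤ n + 3) (hE : (n + 3) % 2 = 0) :
    ∀ j, j < n → ((dPerm n h8 hE ^ j) ⟨1, by omega⟩ : Fin (n + 3)).1 = HH (n + 3) j := by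
  intro j
  induction j with
  | zero => intro _; rw [pow_zero, Equiv.Perm.one_apply]; exact HH0.symm
  | succ j ih =>
    intro hj
    have hj' : j < n := by omega
    obtain ⟨hlt, hh0, hh4, hh5⟩ := HH_moved h8 hE j (by omega)
    have hmk : (dPerm n h8 hE ^ j) ⟨1, by omega⟩ = ⟨HH (n + 3) j, hlt⟩ := Fin.ext (ih hj')
    rw [pow_succ', Equiv.Perm.mul_apply, hmk, dPerm_apply h8 hE _ hlt hh0 hh4 hh5]
    exact HH_step h8 hE j (by omega)

lemma dPerm_isCycle {n : ℕ} (h8 : 8 ≤ n + 3) (hE : (n + 3) % 2 = 0) :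
    (dPerm n h8 hE).IsCycle := by
  apply isCycle_orbit _ ⟨1, by omega⟩
  · rw [dPerm_apply h8 hE 1 (by omega) (by omega) (by omega) (by omega)]
    intro hcon
    exact (by norm_num [CC1] : CC (n + 3) 1 ≠ 1) (congrArg Fin.val hcon)
  · intro y hy
    have hy0 : y.1 ≠ 0 := by
      intro h; apply hy
      rw [show y = ⟨0, by omega⟩ from Fin.ext h]; exact dPerm_fix0 h8 hE
    have hy4 : y.1 ≠ 4 := by
      intro h; apply hy
      rw [show y = ⟨4, by omega⟩ from Fin.ext h]; exact dPerm_fix4 h8 hE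
    have hy5 : y.1 ≠ 5 := by
      intro h; apply hy
      rw [show y = ⟨5, by omega⟩ from Fin.ext h]; exact dPerm_fix5 h8 hE
    have hk := dI_lt h8 hE y.1 y.2 hy0 hy4 hy5
    refine ⟨dI (n + 3) y.1, Fin.ext ?_⟩
    exact (dPow h8 hE _ (by omega)).trans (HH_dI h8 hE y.1 y.2 hy0 hy4 hy5)

lemma dPerm_support_card {n : ℕ} (h8 : 8 ≤ n + 3) (hE : (n + 3) % 2 = 0) :
    (dPerm n h8 hE).support.card = n := by
  have hdsupp : (dPerm n h8 hE).support
      = Finset.univ \ {⟨0, by omega⟩, ⟨4, by omega⟩, ⟨5, by omega⟩} := by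
    ext z
    rw [Equiv.Perm.mem_support, Finset.mem_sdiff, Finset.mem_insert, Finset.mem_insert,
      Finset.mem_singleton]
    constructor
    · intro hz
      refine ⟨Finset.mem_univ z, ?_⟩
      rintro (h | h | h)
      · rw [h] at hz; exact hz (dPerm_fix0 h8 hE)
      · rw [h] at hz; exact hz (dPerm_fix4 h8 hE)
      · rw [h] at hz; exact hz (dPerm_fix5 h8 hE)
    · rintro ⟨-, hz⟩
      push_neg at hz
      obtain ⟨hz0, hz4, hz5⟩ := hz
      have hv0 : z.1 ≠ 0 := fun h => hz0 (Fin.ext h)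
      have hv4 : z.1 ≠ 4 := fun h => hz4 (Fin.ext h)
      have hv5 : z.1 ≠ 5 := fun h => hz5 (Fin.ext h)
      have happ := dPerm_apply h8 hE z.1 z.2 hv0 hv4 hv5
      rw [show (⟨z.1, z.2⟩ : Fin (n + 3)) = z from rfl] at happ
      rw [happ]
      intro hcon
      exact (CC_moved h8 hE z.1 z.2 hv0 hv4 hv5).1 (congrArg Fin.val hcon)
  rw [hdsupp, Finset.card_sdiff_of_subset (Finset.subset_univ _), Finset.card_univ, Fintype.card_fin,
    Finset.card_insert_of_notMem (by simp [Fin.ext_iff]),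
    Finset.card_insert_of_notMem (by simp [Fin.ext_iff]), Finset.card_singleton]
  omega

lemma tPerm_apply0 {n : ℕ} (h8 : 8 ≤ n + 3) :
    tPerm (n + 3) h8 ⟨0, by omega⟩ = ⟨4, by omega⟩ := Fin.ext rfl
lemma tPerm_apply4 {n : ℕ} (h8 : 8 ≤ n + 3) :
    tPerm (n + 3) h8 ⟨4, by omega⟩ = ⟨5, by omega⟩ := Fin.ext rfl
lemma tPerm_apply5 {n : ℕ} (h8 : 8 ≤ n + 3) :
    tPerm (n + 3) h8 ⟨5, by omega⟩ = ⟨0, by omega⟩ := Fin.ext rfl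

lemma tPerm_isCycle {n : ℕ} (h8 : 8 ≤ n + 3) : (tPerm (n + 3) h8).IsCycle := by
  apply isCycle_orbit _ ⟨0, by omega⟩
  · rw [tPerm_apply0]
    intro hcon
    exact (by omega : (4 : ℕ) ≠ 0) (congrArg Fin.val hcon)
  · intro y hy
    have hmem : y.1 = 0 ∨ y.1 = 4 ∨ y.1 = 5 := by
      by_contra hcon
      push_neg at hcon
      exact hy (Fin.ext (tf_other hcon.1 hcon.2.1 hcon.2.2))
    rcases hmem with h | h | h
    · exact ⟨0, by rw [pow_zero, Equiv.Perm.one_apply]; exact Fin.ext h.symm⟩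
    · exact ⟨1, by rw [pow_one, show y = ⟨4, by omega⟩ from Fin.ext h]; exact tPerm_apply0 h8⟩
    · exact ⟨2, by
        rw [pow_two, Equiv.Perm.mul_apply, tPerm_apply0, tPerm_apply4,
          show y = ⟨5, by omega⟩ from Fin.ext h]⟩

lemma tPerm_support_card {n : ℕ} (h8 : 8 ≤ n + 3) : (tPerm (n + 3) h8).support.card = 3 := by
  have htsupp : (tPerm (n + 3) h8).support
      = {⟨0, by omega⟩, ⟨4, by omega⟩, ⟨5, by omega⟩} := by
    ext z
    rw [Equiv.Perm.mem_support, Finset.mem_insert, Finset.mem_insert, Finset.mem_singleton]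
    constructor
    · intro hz
      by_contra hcon
      push_neg at hcon
      exact hz (Fin.ext (tf_other (fun h => hcon.1 (Fin.ext h))
        (fun h => hcon.2.1 (Fin.ext h)) (fun h => hcon.2.2 (Fin.ext h))))
    · rintro (h | h | h) <;> rw [h]
      · rw [tPerm_apply0]; intro hcon; exact (by omega : (4 : ℕ) ≠ 0) (congrArg Fin.val hcon)
      · rw [tPerm_apply4]; intro hcon; exact (by omega : (5 : ℕ) ≠ 4) (congrArg Fin.val hcon)
      · rw [tPerm_apply5]; intro hcon; exact (by omega : (0 : ℕ) ≠ 5) (congrArg Fin.val hcon)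
  rw [htsupp, Finset.card_insert_of_notMem (by simp [Fin.ext_iff]),
    Finset.card_insert_of_notMem (by simp [Fin.ext_iff]), Finset.card_singleton]

lemma comm_cycleType {n : ℕ} (h8 : 8 ≤ n + 3) (hE : (n + 3) % 2 = 0) :
    (commPerm n h8 hE).cycleType = {n, 3} := by
  have hdisj : (tPerm (n + 3) h8).Disjoint (dPerm n h8 hE) := by
    intro x
    rcases (by omega : x.1 = 0 ∨ x.1 = 4 ∨ x.1 = 5 ∨ (x.1 ≠ 0 ∧ x.1 ≠ 4 ∧ x.1 ≠ 5)) with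
      h | h | h | ⟨h, h', h''⟩
    · right; rw [show x = ⟨0, by omega⟩ from Fin.ext h]; exact dPerm_fix0 h8 hE
    · right; rw [show x = ⟨4, by omega⟩ from Fin.ext h]; exact dPerm_fix4 h8 hE
    · right; rw [show x = ⟨5, by omega⟩ from Fin.ext h]; exact dPerm_fix5 h8 hE
    · left; exact Fin.ext (tf_other h h' h'')
  have hfact : commPerm n h8 hE = tPerm (n + 3) h8 * dPerm n h8 hE :=
    (mul_inv_cancel_left _ _).symm
  rw [hfact, hdisj.cycleType_mul, (tPerm_isCycle h8).cycleType, (dPerm_isCycle h8 hE).cycleType,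
    tPerm_support_card h8, dPerm_support_card h8 hE]
  rw [Multiset.singleton_add,
    Multiset.insert_eq_cons]
  rw [show ({n} : Multiset ℕ) = n ::ₘ 0 from rfl, show ({3} : Multiset ℕ) = 3 ::ₘ 0 from rfl]
  exact Multiset.cons_swap 3 n 0

end CommAux

/-- For every odd `n ≥ 5` there is an `(n+3)`-cycle `π` in `Sₙ₊₃` with
`π(1) = 2` (0-indexed: `0 ↦ 1`) such that `[σₙ₊₃, π]` has cycle type `(n, 3)`,
and the commutator contains the 3-cycle `(1 5 6)` (0-indexed: `0 ↦ 4 ↦ 5 ↦ 0`). -/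
theorem exists_commutator_cycleType_n_three (n : ℕ) (hn : 5 ≤ n) (hodd : Odd n) :
    ∃ π : Equiv.Perm (Fin (n + 3)),
      π.IsCycle ∧ π.support.card = n + 3 ∧
      π ⟨0, by omega⟩ = ⟨1, by omega⟩ ∧
      ((finRotate (n + 3))⁻¹ * π⁻¹ * finRotate (n + 3) * π).cycleType
        = ({n, 3} : Multiset ℕ) ∧
      ((finRotate (n + 3))⁻¹ * π⁻¹ * finRotate (n + 3) * π) ⟨0, by omega⟩
        = ⟨4, by omega⟩ ∧
      ((finRotate (n + 3))⁻¹ * π⁻¹ * finRotate (n + 3) * π) ⟨4, by omega⟩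
        = ⟨5, by omega⟩ ∧
      ((finRotate (n + 3))⁻¹ * π⁻¹ * finRotate (n + 3) * π) ⟨5, by omega⟩
        = ⟨0, by omega⟩ := by
  have ho : n % 2 = 1 := Nat.odd_iff.mp hodd
  have h8 : 8 ≤ n + 3 := by omega
  have hE : (n + 3) % 2 = 0 := by omega
  refine ⟨CommAux.piPerm (n + 3) h8 hE, CommAux.piPerm_isCycle h8 hE,
    CommAux.piPerm_support_card h8 hE, Fin.ext rfl, CommAux.comm_cycleType h8 hE,
    (CommAux.comm_apply h8 hE _).trans (Fin.ext rfl),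
    (CommAux.comm_apply h8 hE _).trans (Fin.ext rfl),
    (CommAux.comm_apply h8 hE _).trans (Fin.ext rfl)⟩
end
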